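/- arXiv:2509.12010 — 2 statements merged into one kernel-verified Lean document; each statement's English description precedes it below -/
import Mathlib

section
/- Let M = (S, A, s0, p, γ) be a finite discounted MDP without reward, π_E a policy, and r_E ∈ ℝ^{S×A}. (i) If π_E is deterministic and π_E ∈ argmax_π V^π(s0;p,r_E), define r^OPT(s,a) := 1 if s ∈ S_{M,π_E} and π_E(s) = a, := 0 if s ∈ S_{M,π_E} and π_E(s) ≠ a, := 1/|A| if s ∉ S_{M,π_E}; then every π* ∈ argmax_π V^π(s0;p,r^OPT) satisfies V^{π*}(s0;p,r_E) = V*(s0;p,r_E). (ii) If π_E(a|s) > 0 for all (s,a), S_{M,π_E} = S, and π_E is the unique maximizer of π ↦ V^π_λ(s0;p,r_E) for some λ > 0, define r^MCE(s,a) := log π_E(a|s); then every π* ∈ argmax_π V^π(s0;p,r^MCE) satisfies V^{π*}(s0;p,r_E) = V*(s0;p,r_E). (iii) If π_E(a|s) > 0 for all (s,a), S_{M,π_E} = S, and π_E(a|s) = exp(Q*(s,a;p,r_E)/β)/∑_{a'} exp(Q*(s,a';p,r_E)/β) for all (s,a) and some β > 0, define r^BIRL(s,a) := log(π_E(a|s)/max_{a'}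 π_E(a'|s)); then every π* ∈ argmax_π V^π(s0;p,r^BIRL) satisfies V^{π*}(s0;p,r_E) = V*(s0;p,r_E). -/
open scoped ENNReal

open scoped BigOperators
open MeasureTheory

/-- A finite discounted MDP without reward. -/
structure MDP (S A : Type) [Fintype S] [Fintype A] where
  s0 : S
  p : S → A → S → ℝ
  p_nonneg : ∀ s a s', 0 ≤ p s a s'
  p_sum_one : ∀ s a, ∑ s', p s a s' = 1
  disc : ℝ
  disc_nonneg : 0 ≤ disc
  disc_lt_one : disc < 1

section Defs

variable {S A : Type} [Fintype S] [Fintype A] [DecidableEq S] [DecidableEq A]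

/-- `π` is a (stochastic) policy: each `π s` is a probability distribution on actions. -/
def IsPolicy (π : S → A → ℝ) : Prop :=
  (∀ s a, 0 ≤ π s a) ∧ ∀ s, ∑ a, π s a = 1

open Classical in
/-- The stochastic policy induced by a deterministic policy `d`. -/
noncomputable def detPolicy (d : S → A) : S → A → ℝ :=
  fun s a => if a = d s then 1 else 0

/-- The state-transition matrix of a policy. -/
noncomputable def Pmat (M : MDP S A) (π : S → A → ℝ) : Matrix S S ℝ :=
  Matrix.of fun s s' => ∑ a, π s a * M.p s a s'

/-- The value function `V^π(s; p, r)`. -/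
noncomputable def Vpi (M : MDP S A) (π : S → A → ℝ) (r : S × A → ℝ) (s : S) : ℝ :=
  ∑' t : ℕ, M.disc ^ t * ((Pmat M π ^ t).mulVec (fun s' => ∑ a, π s' a * r (s', a))) s

/-- The optimal value function `V*(s; p, r)`. -/
noncomputable def Vstar (M : MDP S A) (r : S × A → ℝ) (s : S) : ℝ :=
  ⨆ π : {π : S → A → ℝ // IsPolicy π}, Vpi M π.1 r s

noncomputable def Qpi (M : MDP S A) (π : S → A → ℝ) (r : S × A → ℝ) (s : S) (a : A) : ℝ :=
  r (s, a) + M.disc * ∑ s', M.p s a s' * Vpi M π r s'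

noncomputable def Api (M : MDP S A) (π : S → A → ℝ) (r : S × A → ℝ) (s : S) (a : A) : ℝ :=
  Qpi M π r s a - Vpi M π r s

noncomputable def Qstar (M : MDP S A) (r : S × A → ℝ) (s : S) (a : A) : ℝ :=
  r (s, a) + M.disc * ∑ s', M.p s a s' * Vstar M r s'

noncomputable def Astar (M : MDP S A) (r : S × A → ℝ) (s : S) (a : A) : ℝ :=
  Qstar M r s a - Vstar M r s

/-- The soft (entropy-regularized) value function `V^π_λ(s; p, r)`. -/
noncomputable def VpiSoft (M : MDP S A) (lam : ℝ) (π : S → A → ℝ) (r : S × A → ℝ) (s : S) : ℝ :=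
  ∑' t : ℕ, M.disc ^ t *
    ((Pmat M π ^ t).mulVec
      (fun s' => ∑ a, π s' a * (r (s', a) - lam * Real.log (π s' a)))) s

noncomputable def VstarSoft (M : MDP S A) (lam : ℝ) (r : S × A → ℝ) (s : S) : ℝ :=
  ⨆ π : {π : S → A → ℝ // IsPolicy π}, VpiSoft M lam π.1 r s

noncomputable def QstarSoft (M : MDP S A) (lam : ℝ) (r : S × A → ℝ) (s : S) (a : A) : ℝ :=
  r (s, a) + M.disc * ∑ s', M.p s a s' * VstarSoft M lam r s'

noncomputable def AstarSoft (M : MDP S A) (lam : ℝ) (r : S × A → ℝ) (s : S) (a : A) : ℝ :=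
  QstarSoft M lam r s a - VstarSoft M lam r s

/-- The OPT feasible set `R^{OPT,S̄}_{M,d}` of a deterministic policy `d`. -/
def ROPT (M : MDP S A) (Sbar : Set S) (d : S → A) : Set (S × A → ℝ) :=
  {r | ∀ s ∈ Sbar, ∀ a, Qstar M r s a ≤ Qstar M r s (d s)}

/-- The MCE feasible set `R^{MCE,S}_{M,π}` (with `S̄ = S`). -/
def RMCE (M : MDP S A) (lam : ℝ) (π : S → A → ℝ) : Set (S × A → ℝ) :=
  {r | ∀ s a, π s a =
      Real.exp (QstarSoft M lam r s a / lam) / ∑ a', Real.exp (QstarSoft M lam r s a' / lam)}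

/-- The BIRL feasible set `R^{BIRL,S}_{M,π}` (with `S̄ = S`). -/
def RBIRL (M : MDP S A) (bet : ℝ) (π : S → A → ℝ) : Set (S × A → ℝ) :=
  {r | ∀ s a, π s a =
      Real.exp (Qstar M r s a / bet) / ∑ a', Real.exp (Qstar M r s a' / bet)}

open Classical in
/-- The matrix `W_{p,π}`. -/
noncomputable def Wmat (M : MDP S A) (π : S → A → ℝ) : Matrix S S ℝ :=
  Matrix.of fun s s' => (if s' = s then (1 : ℝ) else 0) - M.disc * ∑ a, π s a * M.p s a s'

/-- `k_π := |det W_{p,π}|^{-1/|S|}`. -/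
noncomputable def kpi (M : MDP S A) (π : S → A → ℝ) : ℝ :=
  |(Wmat M π).det| ^ (-(1 : ℝ) / (Fintype.card S : ℝ))

/-- `𝒮R^{OPT}_M`. -/
def SROPT (M : MDP S A) (C1 C2 : ℝ) : Set (S × A → ℝ) :=
  {r | ∀ π : S → A → ℝ, IsPolicy π → (∀ s, Vpi M π r s = Vstar M r s) →
      ∀ s a, |Vpi M π r s| ≤ C1 * kpi M π ∧ |Api M π r s a| ≤ C2}

/-- `𝒮R^{MCE}_M`. -/
def SRMCE (M : MDP S A) (lam C1 C2 : ℝ) : Set (S × A → ℝ) :=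
  {r | ∀ s a, |VstarSoft M lam r s| ≤ C1 ∧ |AstarSoft M lam r s a| ≤ C2}

/-- `𝒮R^{BIRL}_M`. -/
def SRBIRL (M : MDP S A) (C1 C2 : ℝ) : Set (S × A → ℝ) :=
  {r | ∀ s a, |Vstar M r s| ≤ C1 ∧ |Astar M r s a| ≤ C2}

/-- Discounted state occupancy `∑_{t≥0} γ^t P_{M,π}(s_t = s)`. -/
noncomputable def occ (M : MDP S A) (π : S → A → ℝ) (s : S) : ℝ :=
  ∑' t : ℕ, M.disc ^ t * (Pmat M π ^ t) M.s0 s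

/-- The support `S_{M,π}` of a policy: states reachable with positive probability. -/
def supp (M : MDP S A) (π : S → A → ℝ) : Set S := {s | 0 < occ M π s}

end Defs

/-- The unit hypercube `[-1,1]^{S×A}`. -/
def cube (S A : Type) [Fintype S] [Fintype A] : Set (S × A → ℝ) :=
  {r | ∀ sa, |r sa| ≤ 1}

open Classical in
/-- The (rescaled) centroid `r^{OPT}_{M,π_E}` of the OPT feasible set. -/
noncomputable def rOPTcentroid {S A : Type} [Fintype S] [Fintype A] [DecidableEq S] [DecidableEq A]
    (M : MDP S A) (d : S → A) : S × A → ℝ :=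
  fun sa => if sa.1 ∈ supp M (detPolicy d) then (if sa.2 = d sa.1 then 1 else 0)
            else 1 / (Fintype.card A : ℝ)


section S10proof
variable {S A : Type} [Fintype S] [Fintype A] [DecidableEq S] [DecidableEq A] [Nonempty A]
namespace S10


noncomputable def Rvec (M : MDP S A) (π : S → A → ℝ) (r : S × A → ℝ) : S → ℝ :=
  fun s => ∑ a, π s a * r (s, a)

lemma Vpi_def (M : MDP S A) (π : S → A → ℝ) (r : S × A → ℝ) (s : S) :
    Vpi M π r s = ∑' t : ℕ, M.disc ^ t * ((Pmat M π ^ t).mulVec (Rvec M π r)) s := rfl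

def RowStoch (Q : Matrix S S ℝ) : Prop := (∀ s s', 0 ≤ Q s s') ∧ ∀ s, ∑ s', Q s s' = 1

lemma rowStoch_Pmat {M : MDP S A} {π : S → A → ℝ} (h : IsPolicy π) : RowStoch (Pmat M π) := by
  constructor
  · intro s s'
    exact Finset.sum_nonneg fun a _ => mul_nonneg (h.1 s a) (M.p_nonneg s a s')
  · intro s
    show ∑ s', ∑ a, π s a * M.p s a s' = 1
    rw [Finset.sum_comm]
    simp_rw [← Finset.mul_sum, M.p_sum_one]
    simpa using h.2 s

lemma RowStoch.mul {Q R : Matrix S S ℝ} (hQ : RowStoch Q) (hR : RowStoch R) :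
    RowStoch (Q * R) := by
  constructor
  · intro s s'
    rw [Matrix.mul_apply]
    exact Finset.sum_nonneg fun j _ => mul_nonneg (hQ.1 s j) (hR.1 j s')
  · intro s
    simp_rw [Matrix.mul_apply]
    rw [Finset.sum_comm]
    simp_rw [← Finset.mul_sum, hR.2]
    simpa using hQ.2 s

lemma RowStoch.pow {Q : Matrix S S ℝ} (hQ : RowStoch Q) (t : ℕ) : RowStoch (Q ^ t) := by
  induction t with
  | zero =>
      constructor
      · intro s s'
        simp [Matrix.one_apply]
        split <;> norm_num
      · intro s; simp [Matrix.one_apply]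
  | succ n ih =>
      rw [pow_succ]
      exact ih.mul hQ

lemma RowStoch.abs_mulVec_le {Q : Matrix S S ℝ} (hQ : RowStoch Q) {v : S → ℝ} {B : ℝ}
    (hv : ∀ s, |v s| ≤ B) (s : S) : |Q.mulVec v s| ≤ B := by
  have h1 : |Q.mulVec v s| ≤ ∑ s', |Q s s' * v s'| := Finset.abs_sum_le_sum_abs _ _
  refine h1.trans ?_
  have h2 : ∀ s' ∈ Finset.univ, |Q s s' * v s'| ≤ Q s s' * B := by
    intro s' _
    rw [abs_mul, abs_of_nonneg (hQ.1 s s')]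
    exact mul_le_mul_of_nonneg_left (hv s') (hQ.1 s s')
  refine (Finset.sum_le_sum h2).trans ?_
  rw [← Finset.sum_mul, hQ.2 s, one_mul]

noncomputable def vBound (v : S → ℝ) : ℝ := ∑ s, |v s|

lemma abs_le_vBound (v : S → ℝ) (s : S) : |v s| ≤ vBound v :=
  Finset.single_le_sum (fun s' _ => abs_nonneg (v s')) (Finset.mem_univ s)

lemma summable_pow_mulVec (M : MDP S A) {π : S → A → ℝ} (hπ : IsPolicy π) (v : S → ℝ) (s : S) :
    Summable (fun t : ℕ => M.disc ^ t * ((Pmat M π ^ t).mulVec v) s) := by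
  have hgeo : Summable (fun t : ℕ => vBound v * M.disc ^ t) :=
    (summable_geometric_of_lt_one M.disc_nonneg M.disc_lt_one).mul_left _
  refine Summable.of_norm_bounded hgeo ?_
  intro t
  rw [Real.norm_eq_abs, abs_mul, abs_pow, abs_of_nonneg M.disc_nonneg, mul_comm]
  exact mul_le_mul_of_nonneg_right
    (((rowStoch_Pmat hπ).pow t).abs_mulVec_le (abs_le_vBound v) s)
    (pow_nonneg M.disc_nonneg t)

lemma abs_Vpi_le (M : MDP S A) {π : S → A → ℝ} (hπ : IsPolicy π) (r : S × A → ℝ) (s : S) :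
    |Vpi M π r s| ≤ vBound (Rvec M π r) / (1 - M.disc) := by
  rw [Vpi_def]
  have h1 : |∑' t : ℕ, M.disc ^ t * ((Pmat M π ^ t).mulVec (Rvec M π r)) s|
      ≤ ∑' t : ℕ, vBound (Rvec M π r) * M.disc ^ t := by
    have hgeo : Summable (fun t : ℕ => vBound (Rvec M π r) * M.disc ^ t) :=
      (summable_geometric_of_lt_one M.disc_nonneg M.disc_lt_one).mul_left _
    have hn := norm_tsum_le_tsum_norm ((summable_pow_mulVec M hπ (Rvec M π r) s).norm)
    simp_rw [Real.norm_eq_abs] at hn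
    refine hn.trans (Summable.tsum_le_tsum ?_ ((summable_pow_mulVec M hπ _ s).abs) hgeo)
    intro t
    rw [abs_mul, abs_pow, abs_of_nonneg M.disc_nonneg, mul_comm]
    exact mul_le_mul_of_nonneg_right
      (((rowStoch_Pmat hπ).pow t).abs_mulVec_le (abs_le_vBound _) s)
      (pow_nonneg M.disc_nonneg t)
  refine h1.trans ?_
  rw [tsum_mul_left, tsum_geometric_of_lt_one M.disc_nonneg M.disc_lt_one, div_eq_mul_inv]



lemma mulVec_apply' (Q : Matrix S S ℝ) (v : S → ℝ) (s : S) :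
    Q.mulVec v s = ∑ s', Q s s' * v s' := rfl

lemma Vpi_rec (M : MDP S A) {π : S → A → ℝ} (hπ : IsPolicy π) (r : S × A → ℝ) (s : S) :
    Vpi M π r s = Rvec M π r s + M.disc * ∑ s', Pmat M π s s' * Vpi M π r s' := by
  rw [Vpi_def, Summable.tsum_eq_zero_add (summable_pow_mulVec M hπ _ s)]
  congr 1
  · simp [Matrix.one_mulVec]
  · have key : ∀ t : ℕ, M.disc ^ (t+1) * ((Pmat M π ^ (t+1)).mulVec (Rvec M π r)) s
        = ∑ s', M.disc * Pmat M π s s' *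
            (M.disc ^ t * ((Pmat M π ^ t).mulVec (Rvec M π r)) s') := by
      intro t
      rw [pow_succ' (Pmat M π) t]
      rw [← Matrix.mulVec_mulVec]
      rw [mulVec_apply' (Pmat M π)]
      rw [Finset.mul_sum]
      refine Finset.sum_congr rfl fun s' _ => ?_
      ring
    simp_rw [key]
    rw [Summable.tsum_finsetSum (fun s' _ => ((summable_pow_mulVec M hπ (Rvec M π r) s').mul_left
      (M.disc * Pmat M π s s')))]
    rw [Finset.mul_sum]
    refine Finset.sum_congr rfl fun s' _ => ?_
    rw [tsum_mul_left, Vpi_def, mul_assoc]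

lemma le_zero_of_subinvariant {Q : Matrix S S ℝ} (hQ : RowStoch Q) {γ : ℝ} (hγ0 : 0 ≤ γ)
    (hγ1 : γ < 1) {e : S → ℝ} (he : ∀ s, e s ≤ γ * ∑ s', Q s s' * e s') : ∀ s, e s ≤ 0 := by
  intro s
  obtain ⟨sm, -, hm⟩ := Finset.exists_max_image Finset.univ e ⟨s, Finset.mem_univ s⟩
  have h1 : e sm ≤ γ * e sm := by
    refine (he sm).trans (mul_le_mul_of_nonneg_left ?_ hγ0)
    calc ∑ s', Q sm s' * e s'
        ≤ ∑ s', Q sm s' * e sm :=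
          Finset.sum_le_sum fun s' _ =>
            mul_le_mul_of_nonneg_left (hm s' (Finset.mem_univ _)) (hQ.1 sm s')
      _ = e sm := by rw [← Finset.sum_mul, hQ.2 sm, one_mul]
  have h2 : e sm ≤ 0 := by nlinarith
  exact (hm s (Finset.mem_univ s)).trans h2

lemma fixed_eq_Vpi (M : MDP S A) {π : S → A → ℝ} (hπ : IsPolicy π) (r : S × A → ℝ) {v : S → ℝ}
    (hv : ∀ s, v s = Rvec M π r s + M.disc * ∑ s', Pmat M π s s' * v s') :
    ∀ s, v s = Vpi M π r s := by
  have hrec : ∀ s, v s - Vpi M π r s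
      = M.disc * ∑ s', Pmat M π s s' * (v s' - Vpi M π r s') := by
    intro s
    have h3 : ∑ s', Pmat M π s s' * (v s' - Vpi M π r s')
        = (∑ s', Pmat M π s s' * v s') - ∑ s', Pmat M π s s' * Vpi M π r s' := by
      rw [← Finset.sum_sub_distrib]
      exact Finset.sum_congr rfl fun s' _ => by ring
    rw [h3, hv s, Vpi_rec M hπ r s]
    ring
  have hle : ∀ s, v s - Vpi M π r s ≤ 0 :=
    le_zero_of_subinvariant (rowStoch_Pmat hπ) M.disc_nonneg M.disc_lt_one
      (fun s => le_of_eq (hrec s))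
  have hge : ∀ s, -(v s - Vpi M π r s) ≤ 0 := by
    refine le_zero_of_subinvariant (Q := Pmat M π) (e := fun s => -(v s - Vpi M π r s))
      (rowStoch_Pmat hπ) M.disc_nonneg M.disc_lt_one ?_
    intro s
    have h4 : ∑ s', Pmat M π s s' * -(v s' - Vpi M π r s')
        = -∑ s', Pmat M π s s' * (v s' - Vpi M π r s') := by
      rw [← Finset.sum_neg_distrib]
      exact Finset.sum_congr rfl fun s' _ => by ring
    rw [h4]
    show -(v s - Vpi M π r s) ≤ M.disc * -∑ s', Pmat M π s s' * (v s' - Vpi M π r s')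
    rw [hrec s]
    exact le_of_eq (by ring)
  intro s
  have h5 := hle s
  have h6 := hge s
  linarith

lemma RowStoch.entry_le_one {Q : Matrix S S ℝ} (hQ : RowStoch Q) (s s' : S) : Q s s' ≤ 1 := by
  calc Q s s' ≤ ∑ j, Q s j :=
        Finset.single_le_sum (fun j _ => hQ.1 s j) (Finset.mem_univ s')
    _ = 1 := hQ.2 s

lemma summable_occ (M : MDP S A) {π : S → A → ℝ} (hπ : IsPolicy π) (s s' : S) :
    Summable (fun t : ℕ => M.disc ^ t * (Pmat M π ^ t) s s') := by
  refine Summable.of_norm_bounded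
    (summable_geometric_of_lt_one M.disc_nonneg M.disc_lt_one) ?_
  intro t
  rw [Real.norm_eq_abs, abs_mul, abs_pow, abs_of_nonneg M.disc_nonneg,
    abs_of_nonneg (((rowStoch_Pmat hπ).pow t).1 s s')]
  calc M.disc ^ t * (Pmat M π ^ t) s s' ≤ M.disc ^ t * 1 :=
        mul_le_mul_of_nonneg_left (((rowStoch_Pmat hπ).pow t).entry_le_one s s')
          (pow_nonneg M.disc_nonneg t)
    _ = M.disc ^ t := mul_one _

lemma occ_nonneg (M : MDP S A) {π : S → A → ℝ} (hπ : IsPolicy π) (s : S) : 0 ≤ occ M π s :=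
  tsum_nonneg fun t => mul_nonneg (pow_nonneg M.disc_nonneg t) (((rowStoch_Pmat hπ).pow t).1 _ _)

lemma Vpi_occ (M : MDP S A) {π : S → A → ℝ} (hπ : IsPolicy π) (r : S × A → ℝ) :
    Vpi M π r M.s0 = ∑ s, occ M π s * Rvec M π r s := by
  rw [Vpi_def]
  have key : ∀ t : ℕ, M.disc ^ t * ((Pmat M π ^ t).mulVec (Rvec M π r)) M.s0
      = ∑ s, M.disc ^ t * (Pmat M π ^ t) M.s0 s * Rvec M π r s := by
    intro t
    rw [mulVec_apply', Finset.mul_sum]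
    exact Finset.sum_congr rfl fun s _ => by ring
  simp_rw [key]
  rw [Summable.tsum_finsetSum (fun s _ => (summable_occ M hπ M.s0 s).mul_right (Rvec M π r s))]
  unfold occ
  exact Finset.sum_congr rfl fun s _ => by rw [tsum_mul_right]

lemma occ_sum (M : MDP S A) {π : S → A → ℝ} (hπ : IsPolicy π) :
    ∑ s, occ M π s = (1 - M.disc)⁻¹ := by
  unfold occ
  rw [← Summable.tsum_finsetSum (fun s _ => summable_occ M hπ M.s0 s)]
  have key : ∀ t : ℕ, ∑ s, M.disc ^ t * (Pmat M π ^ t) M.s0 s = M.disc ^ t := by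
    intro t
    rw [← Finset.mul_sum, ((rowStoch_Pmat hπ).pow t).2 M.s0, mul_one]
  simp_rw [key]
  exact tsum_geometric_of_lt_one M.disc_nonneg M.disc_lt_one

lemma Vpi_smul_add (M : MDP S A) {π : S → A → ℝ} (hπ : IsPolicy π) (c : ℝ)
    (r g : S × A → ℝ) (s : S) :
    Vpi M π (fun sa => c * (r sa + g sa)) s = c * (Vpi M π r s + Vpi M π g s) := by
  have hR : Rvec M π (fun sa => c * (r sa + g sa))
      = fun s' => c * (Rvec M π r s' + Rvec M π g s') := by
    funext s'
    simp only [Rvec]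
    rw [← Finset.sum_add_distrib, Finset.mul_sum]
    exact Finset.sum_congr rfl fun a _ => by ring
  rw [Vpi_def, hR]
  have key : ∀ t : ℕ, M.disc ^ t *
        ((Pmat M π ^ t).mulVec (fun s' => c * (Rvec M π r s' + Rvec M π g s'))) s
      = c * (M.disc ^ t * ((Pmat M π ^ t).mulVec (Rvec M π r)) s
          + M.disc ^ t * ((Pmat M π ^ t).mulVec (Rvec M π g)) s) := by
    intro t
    simp only [mulVec_apply']
    have h7 : ∑ s', (Pmat M π ^ t) s s' * (c * (Rvec M π r s' + Rvec M π g s'))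
        = c * ((∑ s', (Pmat M π ^ t) s s' * Rvec M π r s')
            + ∑ s', (Pmat M π ^ t) s s' * Rvec M π g s') := by
      rw [← Finset.sum_add_distrib, Finset.mul_sum]
      exact Finset.sum_congr rfl fun s' _ => by ring
    rw [h7]
    ring
  simp_rw [key]
  rw [tsum_mul_left,
    Summable.tsum_add (summable_pow_mulVec M hπ _ s) (summable_pow_mulVec M hπ _ s), Vpi_def, Vpi_def]

lemma Vpi_eq_Vstar_of_max (M : MDP S A) {πstar : S → A → ℝ} (hstar : IsPolicy πstar)
    (r : S × A → ℝ)
    (hmax : ∀ π, IsPolicy π → Vpi M π r M.s0 ≤ Vpi M πstar r M.s0) :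
    Vpi M πstar r M.s0 = Vstar M r M.s0 := by
  haveI : Nonempty {π : S → A → ℝ // IsPolicy π} := ⟨⟨πstar, hstar⟩⟩
  refine le_antisymm ?_ (ciSup_le fun π => hmax π.1 π.2)
  refine le_ciSup (f := fun π : {π : S → A → ℝ // IsPolicy π} => Vpi M π.1 r M.s0) ?_
    ⟨πstar, hstar⟩
  refine ⟨Vpi M πstar r M.s0, ?_⟩
  rintro x ⟨π, rfl⟩
  exact hmax π.1 π.2



noncomputable def shape (M : MDP S A) (Φ : S → ℝ) : S × A → ℝ :=
  fun sa => M.disc * (∑ s', M.p sa.1 sa.2 s' * Φ s') - Φ sa.1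

lemma Rvec_shape (M : MDP S A) {π : S → A → ℝ} (hπ : IsPolicy π) (Φ : S → ℝ) :
    Rvec M π (shape M Φ) = fun s => M.disc * (Pmat M π).mulVec Φ s - Φ s := by
  funext s
  simp only [Rvec, shape]
  rw [mulVec_apply']
  have h1 : ∑ a, π s a * (M.disc * (∑ s', M.p s a s' * Φ s') - Φ s)
      = M.disc * (∑ a, π s a * ∑ s', M.p s a s' * Φ s') - (∑ a, π s a) * Φ s := by
    rw [Finset.mul_sum, Finset.sum_mul, ← Finset.sum_sub_distrib]
    exact Finset.sum_congr rfl fun a _ => by ring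
  rw [h1, hπ.2 s, one_mul]
  have h2 : ∑ a, π s a * ∑ s', M.p s a s' * Φ s' = ∑ s', Pmat M π s s' * Φ s' := by
    simp_rw [Finset.mul_sum]
    rw [Finset.sum_comm]
    refine Finset.sum_congr rfl fun s' _ => ?_
    show ∑ a, π s a * (M.p s a s' * Φ s') = (∑ a, π s a * M.p s a s') * Φ s'
    rw [Finset.sum_mul]
    exact Finset.sum_congr rfl fun a _ => by ring
  rw [h2]

lemma Vpi_shape (M : MDP S A) {π : S → A → ℝ} (hπ : IsPolicy π) (Φ : S → ℝ) (s0 : S) :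
    Vpi M π (shape M Φ) s0 = -Φ s0 := by
  set f : ℕ → ℝ := fun t => M.disc ^ t * ((Pmat M π ^ t).mulVec Φ) s0 with hf
  have key : ∀ t : ℕ, M.disc ^ t * ((Pmat M π ^ t).mulVec (Rvec M π (shape M Φ))) s0
      = f (t+1) - f t := by
    intro t
    rw [Rvec_shape M hπ Φ]
    have h1 : (Pmat M π ^ t).mulVec (fun s => M.disc * (Pmat M π).mulVec Φ s - Φ s) s0
        = M.disc * ((Pmat M π ^ t).mulVec ((Pmat M π).mulVec Φ)) s0
          - ((Pmat M π ^ t).mulVec Φ) s0 := by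
      simp only [mulVec_apply']
      rw [Finset.mul_sum, ← Finset.sum_sub_distrib]
      exact Finset.sum_congr rfl fun s' _ => by ring
    rw [h1, Matrix.mulVec_mulVec, ← pow_succ]
    simp only [hf]
    ring
  have hsum : Summable (fun t => f (t+1) - f t) :=
    ((summable_nat_add_iff 1).2 (summable_pow_mulVec M hπ Φ s0)).sub
      (summable_pow_mulVec M hπ Φ s0)
  have htend : Filter.Tendsto f Filter.atTop (nhds 0) := by
    refine squeeze_zero_norm (fun t => ?_)
      (by simpa using (tendsto_pow_atTop_nhds_zero_of_lt_one M.disc_nonneg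
        M.disc_lt_one).const_mul (vBound Φ))
    show ‖M.disc ^ t * ((Pmat M π ^ t).mulVec Φ) s0‖ ≤ vBound Φ * M.disc ^ t
    rw [Real.norm_eq_abs, abs_mul, abs_pow, abs_of_nonneg M.disc_nonneg, mul_comm]
    exact mul_le_mul_of_nonneg_right
      (((rowStoch_Pmat hπ).pow t).abs_mulVec_le (abs_le_vBound Φ) s0)
      (pow_nonneg M.disc_nonneg t)
  have h2 : Filter.Tendsto (fun n => ∑ t ∈ Finset.range n, (f (t+1) - f t))
      Filter.atTop (nhds (0 - f 0)) := by
    simp_rw [Finset.sum_range_sub f]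
    exact htend.sub_const (f 0)
  rw [Vpi_def]
  simp_rw [key]
  have h3 : ∑' t : ℕ, (f (t+1) - f t) = 0 - f 0 :=
    tendsto_nhds_unique hsum.hasSum.tendsto_sum_nat h2
  rw [h3]
  simp only [hf]
  simp [Matrix.one_mulVec]

lemma mem_supp_of_pos (M : MDP S A) {π : S → A → ℝ} (hπ : IsPolicy π) {t : ℕ} {s : S}
    (h : 0 < M.disc ^ t * (Pmat M π ^ t) M.s0 s) : s ∈ supp M π := by
  have hle : M.disc ^ t * (Pmat M π ^ t) M.s0 s ≤ occ M π s := by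
    refine Summable.le_tsum (summable_occ M hπ M.s0 s) t fun t' _ => ?_
    exact mul_nonneg (pow_nonneg M.disc_nonneg _) (((rowStoch_Pmat hπ).pow t').1 _ _)
  exact lt_of_lt_of_le h hle

lemma row_eq_of_agree (M : MDP S A) {π π' : S → A → ℝ} (hπ : IsPolicy π)
    (hagree : ∀ s ∈ supp M π, π s = π' s) (t : ℕ) (s : S) :
    M.disc ^ t * (Pmat M π ^ t) M.s0 s = M.disc ^ t * (Pmat M π' ^ t) M.s0 s := by
  induction t generalizing s with
  | zero => simp
  | succ t ih =>
      rw [pow_succ (Pmat M π) t, pow_succ (Pmat M π') t, Matrix.mul_apply, Matrix.mul_apply,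
        Finset.mul_sum, Finset.mul_sum]
      refine Finset.sum_congr rfl fun s' _ => ?_
      have h1 : M.disc ^ (t+1) * ((Pmat M π ^ t) M.s0 s' * Pmat M π s' s)
          = M.disc * ((M.disc ^ t * (Pmat M π ^ t) M.s0 s') * Pmat M π s' s) := by ring
      have h2 : M.disc ^ (t+1) * ((Pmat M π' ^ t) M.s0 s' * Pmat M π' s' s)
          = M.disc * ((M.disc ^ t * (Pmat M π' ^ t) M.s0 s') * Pmat M π' s' s) := by ring
      rw [h1, h2, ← ih s']
      rcases eq_or_lt_of_le (mul_nonneg (pow_nonneg M.disc_nonneg t)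
        (((rowStoch_Pmat hπ).pow t).1 M.s0 s')) with h0 | hpos
      · rw [← h0, zero_mul, zero_mul]
      · have hs' := mem_supp_of_pos M hπ hpos
        have : Pmat M π s' s = Pmat M π' s' s := by
          show ∑ a, π s' a * M.p s' a s = ∑ a, π' s' a * M.p s' a s
          rw [hagree s' hs']
        rw [this]

lemma Vpi_eq_of_agree (M : MDP S A) {π π' : S → A → ℝ} (hπ : IsPolicy π)
    (hagree : ∀ s ∈ supp M π, π s = π' s) (r : S × A → ℝ) :
    Vpi M π r M.s0 = Vpi M π' r M.s0 := by
  rw [Vpi_def, Vpi_def]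
  refine tsum_congr fun t => ?_
  simp only [mulVec_apply']
  rw [Finset.mul_sum, Finset.mul_sum]
  refine Finset.sum_congr rfl fun s _ => ?_
  rw [← mul_assoc, ← mul_assoc, row_eq_of_agree M hπ hagree t s]
  by_cases h0 : M.disc ^ t * (Pmat M π' ^ t) M.s0 s = 0
  · rw [h0, zero_mul, zero_mul]
  · have hrow := row_eq_of_agree M hπ hagree t s
    have hnn : 0 ≤ M.disc ^ t * (Pmat M π ^ t) M.s0 s :=
      mul_nonneg (pow_nonneg M.disc_nonneg t) (((rowStoch_Pmat hπ).pow t).1 M.s0 s)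
    have hpos : 0 < M.disc ^ t * (Pmat M π ^ t) M.s0 s :=
      lt_of_le_of_ne hnn fun hc => h0 (by rw [← hrow, ← hc])
    have hs := mem_supp_of_pos M hπ hpos
    congr 1
    simp only [Rvec]
    exact Finset.sum_congr rfl fun a _ => by rw [hagree s hs]

lemma isPolicy_detPolicy (d : S → A) : IsPolicy (detPolicy d) := by
  constructor
  · intro s a
    unfold detPolicy
    split <;> norm_num
  · intro s
    unfold detPolicy
    simp

lemma Rvec_detPolicy (M : MDP S A) (d : S → A) (r : S × A → ℝ) (s : S) :
    Rvec M (detPolicy d) r s = r (s, d s) := by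
  unfold Rvec detPolicy
  simp

lemma pair_le_one {π : S → A → ℝ} (hπ : IsPolicy π) {s : S} {a b : A} (hab : a ≠ b) :
    π s a + π s b ≤ 1 := by
  have h := Finset.sum_le_sum_of_subset_of_nonneg (Finset.subset_univ {a, b})
    (fun x _ _ => hπ.1 s x)
  rw [Finset.sum_pair hab] at h
  rw [← hπ.2 s]
  exact h

lemma part1 (M : MDP S A) (rE : S × A → ℝ) (d : S → A)
    (hE : ∀ π, IsPolicy π → Vpi M π rE M.s0 ≤ Vpi M (detPolicy d) rE M.s0)
    (πstar : S → A → ℝ) (hstar : IsPolicy πstar)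
    (hopt : ∀ π, IsPolicy π →
      Vpi M π (rOPTcentroid M d) M.s0 ≤ Vpi M πstar (rOPTcentroid M d) M.s0) :
    Vpi M πstar rE M.s0 = Vstar M rE M.s0 := by
  have hπE : IsPolicy (detPolicy (S := S) d) := isPolicy_detPolicy d
  have hcard : (0:ℝ) < (Fintype.card A : ℝ) := by
    exact_mod_cast Fintype.card_pos
  have hrle : ∀ sa, rOPTcentroid M d sa ≤ 1 := by
    intro sa
    unfold rOPTcentroid
    split
    · split <;> norm_num
    · rw [div_le_one hcard]
      exact_mod_cast Fintype.card_pos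
  have hRle : ∀ (π : S → A → ℝ), IsPolicy π → ∀ s, Rvec M π (rOPTcentroid M d) s ≤ 1 := by
    intro π hπ s
    calc Rvec M π (rOPTcentroid M d) s ≤ ∑ a, π s a * 1 :=
          Finset.sum_le_sum fun a _ => mul_le_mul_of_nonneg_left (hrle (s,a)) (hπ.1 s a)
      _ = 1 := by simp [hπ.2 s]
  have hB : ∀ (π : S → A → ℝ), IsPolicy π →
      Vpi M π (rOPTcentroid M d) M.s0 ≤ (1 - M.disc)⁻¹ := by
    intro π hπ
    rw [Vpi_occ M hπ, ← occ_sum M hπ]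
    refine Finset.sum_le_sum fun s _ => ?_
    calc occ M π s * Rvec M π (rOPTcentroid M d) s ≤ occ M π s * 1 :=
          mul_le_mul_of_nonneg_left (hRle π hπ s) (occ_nonneg M hπ s)
      _ = occ M π s := mul_one _
  have hC : Vpi M (detPolicy d) (rOPTcentroid M d) M.s0 = (1 - M.disc)⁻¹ := by
    rw [Vpi_occ M hπE, ← occ_sum M hπE]
    refine Finset.sum_congr rfl fun s _ => ?_
    rcases eq_or_lt_of_le (occ_nonneg M hπE s) with h0 | hpos
    · rw [← h0, zero_mul]
    · have hs : s ∈ supp M (detPolicy d) := hpos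
      rw [Rvec_detPolicy]
      simp [rOPTcentroid, hs]
  have hD : Vpi M πstar (rOPTcentroid M d) M.s0 = (1 - M.disc)⁻¹ :=
    le_antisymm (hB πstar hstar) (hC ▸ hopt (detPolicy d) hπE)
  have hzero : ∀ s, occ M πstar s * (1 - Rvec M πstar (rOPTcentroid M d) s) = 0 := by
    have hsum0 : ∑ s, occ M πstar s * (1 - Rvec M πstar (rOPTcentroid M d) s) = 0 := by
      have h6 : ∑ s, occ M πstar s * (1 - Rvec M πstar (rOPTcentroid M d) s)
          = ∑ s, occ M πstar s
            - ∑ s, occ M πstar s * Rvec M πstar (rOPTcentroid M d) s := by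
        rw [← Finset.sum_sub_distrib]
        exact Finset.sum_congr rfl fun s _ => by ring
      rw [h6, occ_sum M hstar, ← Vpi_occ M hstar, hD, sub_self]
    intro s
    exact (Finset.sum_eq_zero_iff_of_nonneg (fun s _ => mul_nonneg (occ_nonneg M hstar s)
      (by linarith [hRle πstar hstar s]))).1 hsum0 s (Finset.mem_univ s)
  have hagree : ∀ s ∈ supp M πstar, πstar s = detPolicy d s := by
    by_cases hA1 : Fintype.card A = 1
    · haveI : Subsingleton A := Fintype.card_le_one_iff_subsingleton.1 (le_of_eq hA1)
      intro s _
      funext a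
      have ha : a = d s := Subsingleton.elim a (d s)
      have h1 : πstar s a = 1 := by
        have h2 := hstar.2 s
        rwa [Fintype.sum_subsingleton _ a] at h2
      have hdet : detPolicy d s a = 1 := by
        unfold detPolicy
        exact if_pos ha
      rw [hdet]
      exact h1
    · intro s hs
      have hocc : 0 < occ M πstar s := hs
      have hR1 : Rvec M πstar (rOPTcentroid M d) s = 1 := by
        rcases mul_eq_zero.1 (hzero s) with h | h
        · exact absurd h.symm (ne_of_lt hocc)
        · linarith
      by_cases hsE : s ∈ supp M (detPolicy d)
      · have hval : Rvec M πstar (rOPTcentroid M d) s = πstar s (d s) := by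
          simp [Rvec, rOPTcentroid, hsE, mul_ite, mul_one, mul_zero, Finset.sum_ite_eq']
        have h1 : πstar s (d s) = 1 := by rw [← hval]; exact hR1
        funext a
        by_cases ha : a = d s
        · rw [ha, h1]
          simp [detPolicy]
        · have h2 := pair_le_one (s := s) hstar (show a ≠ d s from ha)
          rw [h1] at h2
          have h4 := hstar.1 s a
          simp only [detPolicy, if_neg ha]
          linarith
      · exfalso
        have hval : Rvec M πstar (rOPTcentroid M d) s = 1 / (Fintype.card A : ℝ) := by
          have h5 : ∀ a, πstar s a * rOPTcentroid M d (s, a)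
              = πstar s a * (1 / (Fintype.card A : ℝ)) := by
            intro a
            congr 1
            simp [rOPTcentroid, hsE]
          simp only [Rvec]
          rw [Finset.sum_congr rfl fun a _ => h5 a, ← Finset.sum_mul, hstar.2 s, one_mul]
        rw [hval] at hR1
        rw [div_eq_one_iff_eq (ne_of_gt hcard)] at hR1
        exact hA1 (by exact_mod_cast hR1.symm)
  rw [Vpi_eq_of_agree M hstar hagree rE]
  exact Vpi_eq_Vstar_of_max M hπE rE hE

noncomputable def qv (M : MDP S A) (r : S × A → ℝ) (v : S → ℝ) (s : S) (a : A) : ℝ :=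
  r (s, a) + M.disc * ∑ s', M.p s a s' * v s'

noncomputable def Topt (M : MDP S A) (r : S × A → ℝ) (v : S → ℝ) (s : S) : ℝ :=
  Finset.univ.sup' Finset.univ_nonempty (qv M r v s)

lemma sum_mul_le_sup' {π : S → A → ℝ} (hπ : IsPolicy π) (s : S) (q : A → ℝ) :
    ∑ a, π s a * q a ≤ Finset.univ.sup' Finset.univ_nonempty q := by
  calc ∑ a, π s a * q a
      ≤ ∑ a, π s a * Finset.univ.sup' Finset.univ_nonempty q :=
        Finset.sum_le_sum fun a _ =>
          mul_le_mul_of_nonneg_left (Finset.le_sup' q (Finset.mem_univ a)) (hπ.1 s a)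
    _ = _ := by rw [← Finset.sum_mul, hπ.2 s, one_mul]

lemma qv_diff_le (M : MDP S A) (r : S × A → ℝ) {v w : S → ℝ} (s : S) (a : A) :
    qv M r v s a ≤ qv M r w s a + M.disc * dist v w := by
  unfold qv
  have h2 : ∑ s', M.p s a s' * v s' - ∑ s', M.p s a s' * w s'
      = ∑ s', M.p s a s' * (v s' - w s') := by
    rw [← Finset.sum_sub_distrib]
    exact Finset.sum_congr rfl fun s' _ => by ring
  have h3 : ∑ s', M.p s a s' * (v s' - w s') ≤ ∑ s', M.p s a s' * dist v w := by
    refine Finset.sum_le_sum fun s' _ => mul_le_mul_of_nonneg_left ?_ (M.p_nonneg s a s')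
    calc v s' - w s' ≤ |v s' - w s'| := le_abs_self _
      _ = dist (v s') (w s') := (Real.dist_eq _ _).symm
      _ ≤ dist v w := dist_le_pi_dist v w s'
  rw [← Finset.sum_mul, M.p_sum_one s a, one_mul] at h3
  have h1 : ∑ s', M.p s a s' * v s' ≤ (∑ s', M.p s a s' * w s') + dist v w := by
    linarith [h2 ▸ h3]
  have h4 := mul_le_mul_of_nonneg_left h1 M.disc_nonneg
  rw [mul_add] at h4
  linarith

lemma Topt_le (M : MDP S A) (r : S × A → ℝ) (v w : S → ℝ) (s : S) :
    Topt M r v s ≤ Topt M r w s + M.disc * dist v w := by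
  refine Finset.sup'_le _ _ fun a _ => (qv_diff_le M r (v := v) (w := w) s a).trans ?_
  exact add_le_add_left (Finset.le_sup' (qv M r w s) (Finset.mem_univ a)) _

noncomputable def Kc (M : MDP S A) : NNReal := ⟨M.disc, M.disc_nonneg⟩

lemma contractingWith_Topt (M : MDP S A) (r : S × A → ℝ) :
    ContractingWith (Kc M) (Topt M r) := by
  constructor
  · exact_mod_cast M.disc_lt_one
  · refine LipschitzWith.of_dist_le_mul fun v w => ?_
    show dist (Topt M r v) (Topt M r w) ≤ M.disc * dist v w
    rw [dist_pi_le_iff (mul_nonneg M.disc_nonneg dist_nonneg)]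
    intro s
    rw [Real.dist_eq, abs_le]
    constructor
    · have h1 := Topt_le M r w v s
      rw [dist_comm w v] at h1
      linarith
    · linarith [Topt_le M r v w s]

noncomputable def Vinf (M : MDP S A) (r : S × A → ℝ) : S → ℝ :=
  ContractingWith.fixedPoint (Topt M r) (contractingWith_Topt M r)

lemma Vinf_fixed (M : MDP S A) (r : S × A → ℝ) (s : S) :
    Topt M r (Vinf M r) s = Vinf M r s :=
  congrFun (ContractingWith.fixedPoint_isFixedPt (contractingWith_Topt M r)) s

lemma sum_Pmat_mul (M : MDP S A) (π : S → A → ℝ) (v : S → ℝ) (s : S) :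
    ∑ s', Pmat M π s s' * v s' = ∑ a, π s a * ∑ s', M.p s a s' * v s' := by
  have h1 : ∀ s', Pmat M π s s' * v s' = ∑ a, π s a * (M.p s a s' * v s') := by
    intro s'
    show (∑ a, π s a * M.p s a s') * v s' = _
    rw [Finset.sum_mul]
    exact Finset.sum_congr rfl fun a _ => by ring
  rw [Finset.sum_congr rfl fun s' _ => h1 s', Finset.sum_comm]
  exact Finset.sum_congr rfl fun a _ => by rw [Finset.mul_sum]

lemma Tpi_eq (M : MDP S A) {π : S → A → ℝ} (hπ : IsPolicy π) (r : S × A → ℝ)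
    (v : S → ℝ) (s : S) :
    Rvec M π r s + M.disc * ∑ s', Pmat M π s s' * v s' = ∑ a, π s a * qv M r v s a := by
  unfold Rvec qv
  rw [sum_Pmat_mul, Finset.mul_sum, ← Finset.sum_add_distrib]
  exact Finset.sum_congr rfl fun a _ => by ring

lemma Vpi_le_Vinf (M : MDP S A) {π : S → A → ℝ} (hπ : IsPolicy π) (r : S × A → ℝ) (s : S) :
    Vpi M π r s ≤ Vinf M r s := by
  have key : ∀ s, Vpi M π r s - Vinf M r s
      ≤ M.disc * ∑ s', Pmat M π s s' * (Vpi M π r s' - Vinf M r s') := by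
    intro s
    have h1 := Vpi_rec M hπ r s
    have h2 : Rvec M π r s + M.disc * ∑ s', Pmat M π s s' * Vinf M r s' ≤ Vinf M r s := by
      rw [← Vinf_fixed M r s, Tpi_eq M hπ]
      exact sum_mul_le_sup' hπ s _
    have h3 : ∑ s', Pmat M π s s' * (Vpi M π r s' - Vinf M r s')
        = (∑ s', Pmat M π s s' * Vpi M π r s') - ∑ s', Pmat M π s s' * Vinf M r s' := by
      rw [← Finset.sum_sub_distrib]
      exact Finset.sum_congr rfl fun s' _ => by ring
    rw [h3, mul_sub]
    linarith
  linarith [le_zero_of_subinvariant (rowStoch_Pmat hπ) M.disc_nonneg M.disc_lt_one key s]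

lemma Pmat_detPolicy (M : MDP S A) (d : S → A) (s s' : S) :
    Pmat M (detPolicy d) s s' = M.p s (d s) s' := by
  show ∑ a, detPolicy d s a * M.p s a s' = _
  unfold detPolicy
  simp

lemma exists_greedy (M : MDP S A) (r : S × A → ℝ) (v : S → ℝ) :
    ∃ dd : S → A, ∀ s, Topt M r v s = qv M r v s (dd s) := by
  have h := fun s => Finset.exists_mem_eq_sup' (Finset.univ_nonempty) (qv M r v s)
  choose dd h1 h2 using h
  exact ⟨dd, h2⟩

lemma Vstar_eq_Vinf (M : MDP S A) (r : S × A → ℝ) (s : S) : Vstar M r s = Vinf M r s := by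
  obtain ⟨dd, hdd⟩ := exists_greedy M r (Vinf M r)
  have hdet : IsPolicy (detPolicy (S := S) dd) := isPolicy_detPolicy dd
  haveI : Nonempty {π : S → A → ℝ // IsPolicy π} := ⟨⟨detPolicy dd, hdet⟩⟩
  have hVd : ∀ s, Vinf M r s = Vpi M (detPolicy dd) r s := by
    refine fixed_eq_Vpi M hdet r ?_
    intro s
    rw [Rvec_detPolicy]
    have h4 : ∑ s', Pmat M (detPolicy dd) s s' * Vinf M r s'
        = ∑ s', M.p s (dd s) s' * Vinf M r s' :=
      Finset.sum_congr rfl fun s' _ => by rw [Pmat_detPolicy]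
    rw [h4, ← Vinf_fixed M r s, hdd s]
    rfl
  refine le_antisymm (ciSup_le fun π => Vpi_le_Vinf M π.2 r s) ?_
  rw [hVd s]
  exact le_ciSup (f := fun π : {π : S → A → ℝ // IsPolicy π} => Vpi M π.1 r s)
    ⟨Vinf M r s, by rintro x ⟨π, rfl⟩; exact Vpi_le_Vinf M π.2 r s⟩ ⟨detPolicy dd, hdet⟩

lemma Qstar_eq_qv (M : MDP S A) (r : S × A → ℝ) (s : S) :
    Qstar M r s = qv M r (Vstar M r) s := rfl

lemma Vstar_bellman (M : MDP S A) (r : S × A → ℝ) (s : S) :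
    Vstar M r s = Finset.univ.sup' Finset.univ_nonempty (Qstar M r s) := by
  have hfun : Vstar M r = Vinf M r := funext (Vstar_eq_Vinf M r)
  rw [Qstar_eq_qv]
  calc Vstar M r s = Vinf M r s := Vstar_eq_Vinf M r s
    _ = Topt M r (Vinf M r) s := (Vinf_fixed M r s).symm
    _ = Finset.univ.sup' Finset.univ_nonempty (qv M r (Vstar M r) s) := by rw [hfun]; rfl

lemma VpiSoft_eq_Vpi (M : MDP S A) (lam : ℝ) (π : S → A → ℝ) (r : S × A → ℝ) (s : S) :
    VpiSoft M lam π r s = Vpi M π (fun sa => r sa - lam * Real.log (π sa.1 sa.2)) s := rfl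

noncomputable def lse (lam : ℝ) (q : A → ℝ) : ℝ :=
  lam * Real.log (∑ a, Real.exp (q a / lam))

lemma gibbs_le {lam : ℝ} (hlam : 0 < lam) {π : S → A → ℝ} (hπ : IsPolicy π) (s : S)
    (q : A → ℝ) :
    ∑ a, π s a * (q a - lam * Real.log (π s a)) ≤ lse lam q := by
  set Z := ∑ a, Real.exp (q a / lam) with hZdef
  have hZ : 0 < Z := Finset.sum_pos (fun a _ => Real.exp_pos _) Finset.univ_nonempty
  have key : ∀ a, π s a * (q a - lam * Real.log (π s a))
      ≤ lam * (Real.exp (q a / lam) / Z - π s a) + π s a * lse lam q := by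
    intro a
    rcases eq_or_lt_of_le (hπ.1 s a) with h0 | hpos
    · rw [← h0]
      have h9 : (0:ℝ) ≤ lam * (Real.exp (q a / lam) / Z - 0) + 0 * lse lam q := by
        rw [sub_zero, zero_mul, add_zero]
        positivity
      linarith [h9]
    · have hw : 0 < Real.exp (q a / lam) / Z := by positivity
      have hlogdiv : Real.log (Real.exp (q a / lam) / Z / π s a)
          = q a / lam - Real.log Z - Real.log (π s a) := by
        rw [Real.log_div (ne_of_gt hw) (ne_of_gt hpos),
          Real.log_div (Real.exp_ne_zero _) (ne_of_gt hZ), Real.log_exp]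
      have hineq := Real.log_le_sub_one_of_pos (div_pos hw hpos)
      rw [hlogdiv] at hineq
      have h5 : lam * π s a * (q a / lam - Real.log Z - Real.log (π s a))
          ≤ lam * π s a * (Real.exp (q a / lam) / Z / π s a - 1) :=
        mul_le_mul_of_nonneg_left hineq (by positivity)
      have hπa : π s a ≠ 0 := ne_of_gt hpos
      have hlam' : lam ≠ 0 := ne_of_gt hlam
      have hZ0 : Z ≠ 0 := ne_of_gt hZ
      have hL : lse lam q = lam * Real.log Z := rfl
      have e1 : lam * π s a * (q a / lam - Real.log Z - Real.log (π s a))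
          = π s a * q a - lam * π s a * Real.log Z - lam * π s a * Real.log (π s a) := by
        field_simp
      have e2 : lam * π s a * (Real.exp (q a / lam) / Z / π s a - 1)
          = lam * (Real.exp (q a / lam) / Z) - lam * π s a := by
        field_simp
      rw [e1, e2] at h5
      rw [hL]
      nlinarith [h5]
  have hsw : ∑ a, Real.exp (q a / lam) / Z = 1 := by
    rw [← Finset.sum_div, ← hZdef, div_self (ne_of_gt hZ)]
  calc ∑ a, π s a * (q a - lam * Real.log (π s a))
      ≤ ∑ a, (lam * (Real.exp (q a / lam) / Z - π s a) + π s a * lse lam q) :=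
        Finset.sum_le_sum fun a _ => key a
    _ = lam * ((∑ a, Real.exp (q a / lam) / Z) - ∑ a, π s a)
        + (∑ a, π s a) * lse lam q := by
        rw [Finset.sum_add_distrib, ← Finset.sum_mul]
        congr 1
        rw [← Finset.sum_sub_distrib, Finset.mul_sum]
    _ = lse lam q := by rw [hsw, hπ.2 s]; ring

noncomputable def softmax (lam : ℝ) (q : S → A → ℝ) : S → A → ℝ :=
  fun s a => Real.exp (q s a / lam) / ∑ a', Real.exp (q s a' / lam)

lemma isPolicy_softmax (lam : ℝ) (q : S → A → ℝ) : IsPolicy (softmax lam q) := by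
  constructor
  · intro s a
    have hZ : 0 < ∑ a', Real.exp (q s a' / lam) :=
      Finset.sum_pos (fun a _ => Real.exp_pos _) Finset.univ_nonempty
    unfold softmax
    positivity
  · intro s
    unfold softmax
    rw [← Finset.sum_div, div_self (ne_of_gt
      (Finset.sum_pos (fun a _ => Real.exp_pos _) Finset.univ_nonempty))]

lemma gibbs_eq {lam : ℝ} (hlam : 0 < lam) (q : S → A → ℝ) (s : S) :
    ∑ a, softmax lam q s a * (q s a - lam * Real.log (softmax lam q s a)) = lse lam (q s) := by
  have hZ : 0 < ∑ a', Real.exp (q s a' / lam) :=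
    Finset.sum_pos (fun a _ => Real.exp_pos _) Finset.univ_nonempty
  have hlog : ∀ a, Real.log (softmax lam q s a)
      = q s a / lam - Real.log (∑ a', Real.exp (q s a' / lam)) := by
    intro a
    unfold softmax
    rw [Real.log_div (Real.exp_ne_zero _) (ne_of_gt hZ), Real.log_exp]
  have hterm : ∀ a, softmax lam q s a * (q s a - lam * Real.log (softmax lam q s a))
      = softmax lam q s a * lse lam (q s) := by
    intro a
    rw [hlog a]
    have hL : lse lam (q s) = lam * Real.log (∑ a', Real.exp (q s a' / lam)) := rfl
    rw [hL]
    congr 1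
    field_simp
    ring
  rw [Finset.sum_congr rfl fun a _ => hterm a, ← Finset.sum_mul,
    (isPolicy_softmax lam q).2 s, one_mul]

lemma lse_le {lam : ℝ} (hlam : 0 < lam) {q q' : A → ℝ} {c : ℝ} (h : ∀ a, q a ≤ q' a + c) :
    lse lam q ≤ lse lam q' + c := by
  have hZ' : 0 < ∑ a, Real.exp (q' a / lam) :=
    Finset.sum_pos (fun a _ => Real.exp_pos _) Finset.univ_nonempty
  have h1 : ∑ a, Real.exp (q a / lam) ≤ Real.exp (c / lam) * ∑ a, Real.exp (q' a / lam) := by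
    rw [Finset.mul_sum]
    refine Finset.sum_le_sum fun a _ => ?_
    calc Real.exp (q a / lam) ≤ Real.exp ((q' a + c) / lam) :=
          Real.exp_le_exp.2 ((div_le_div_iff_of_pos_right hlam).2 (h a))
      _ = Real.exp (c / lam) * Real.exp (q' a / lam) := by
          rw [add_div, Real.exp_add, mul_comm]
  have h2 := Real.log_le_log (Finset.sum_pos (fun a _ => Real.exp_pos _) Finset.univ_nonempty) h1
  rw [Real.log_mul (Real.exp_ne_zero _) (ne_of_gt hZ'), Real.log_exp] at h2
  have h3 := mul_le_mul_of_nonneg_left h2 (le_of_lt hlam)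
  rw [mul_add] at h3
  have h4 : lam * (c / lam) = c := by field_simp
  rw [h4] at h3
  unfold lse
  linarith

noncomputable def TSopt (M : MDP S A) (lam : ℝ) (r : S × A → ℝ) (v : S → ℝ) (s : S) : ℝ :=
  lse lam (qv M r v s)

lemma contractingWith_TSopt (M : MDP S A) {lam : ℝ} (hlam : 0 < lam) (r : S × A → ℝ) :
    ContractingWith (Kc M) (TSopt M lam r) := by
  constructor
  · exact_mod_cast M.disc_lt_one
  · refine LipschitzWith.of_dist_le_mul fun v w => ?_
    show dist (TSopt M lam r v) (TSopt M lam r w) ≤ M.disc * dist v w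
    rw [dist_pi_le_iff (mul_nonneg M.disc_nonneg dist_nonneg)]
    intro s
    rw [Real.dist_eq, abs_le]
    unfold TSopt
    constructor
    · have h1 := lse_le hlam (fun a => qv_diff_le M r (v := w) (w := v) s a)
      rw [dist_comm w v] at h1
      linarith
    · linarith [lse_le hlam (fun a => qv_diff_le M r (v := v) (w := w) s a)]

noncomputable def VinfS (M : MDP S A) {lam : ℝ} (hlam : 0 < lam) (r : S × A → ℝ) : S → ℝ :=
  ContractingWith.fixedPoint (TSopt M lam r) (contractingWith_TSopt M hlam r)

lemma VinfS_fixed (M : MDP S A) {lam : ℝ} (hlam : 0 < lam) (r : S × A → ℝ) (s : S) :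
    TSopt M lam r (VinfS M hlam r) s = VinfS M hlam r s :=
  congrFun (ContractingWith.fixedPoint_isFixedPt (contractingWith_TSopt M hlam r)) s

lemma Tpi_soft_eq (M : MDP S A) {π : S → A → ℝ} (hπ : IsPolicy π) {lam : ℝ} (r : S × A → ℝ)
    (v : S → ℝ) (s : S) :
    Rvec M π (fun sa => r sa - lam * Real.log (π sa.1 sa.2)) s
        + M.disc * ∑ s', Pmat M π s s' * v s'
      = ∑ a, π s a * (qv M r v s a - lam * Real.log (π s a)) := by
  rw [Tpi_eq M hπ (fun sa => r sa - lam * Real.log (π sa.1 sa.2)) v s]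
  refine Finset.sum_congr rfl fun a _ => ?_
  unfold qv
  simp only []
  ring

lemma VpiSoft_le_VinfS (M : MDP S A) {lam : ℝ} (hlam : 0 < lam) {π : S → A → ℝ}
    (hπ : IsPolicy π) (r : S × A → ℝ) (s : S) :
    VpiSoft M lam π r s ≤ VinfS M hlam r s := by
  set rr : S × A → ℝ := fun sa => r sa - lam * Real.log (π sa.1 sa.2) with hrr
  have key : ∀ s, Vpi M π rr s - VinfS M hlam r s
      ≤ M.disc * ∑ s', Pmat M π s s' * (Vpi M π rr s' - VinfS M hlam r s') := by
    intro s
    have h1 := Vpi_rec M hπ rr s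
    have h2 : Rvec M π rr s + M.disc * ∑ s', Pmat M π s s' * VinfS M hlam r s'
        ≤ VinfS M hlam r s := by
      rw [← VinfS_fixed M hlam r s, Tpi_soft_eq M hπ r (VinfS M hlam r) s]
      exact gibbs_le hlam hπ s (qv M r (VinfS M hlam r) s)
    have h3 : ∑ s', Pmat M π s s' * (Vpi M π rr s' - VinfS M hlam r s')
        = (∑ s', Pmat M π s s' * Vpi M π rr s') - ∑ s', Pmat M π s s' * VinfS M hlam r s' := by
      rw [← Finset.sum_sub_distrib]
      exact Finset.sum_congr rfl fun s' _ => by ring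
    rw [h3, mul_sub]
    linarith
  have h6 := le_zero_of_subinvariant (rowStoch_Pmat hπ) M.disc_nonneg M.disc_lt_one key s
  have h7 : VpiSoft M lam π r s = Vpi M π rr s := rfl
  linarith

lemma VinfS_eq_VpiSoft_softmax (M : MDP S A) {lam : ℝ} (hlam : 0 < lam) (r : S × A → ℝ)
    (s : S) :
    VinfS M hlam r s
      = VpiSoft M lam (softmax lam (fun s' => qv M r (VinfS M hlam r) s')) r s := by
  have hπ := isPolicy_softmax lam (fun s' => qv M r (VinfS M hlam r) s')
  have hfix : ∀ s, VinfS M hlam r s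
      = Rvec M (softmax lam fun s' => qv M r (VinfS M hlam r) s')
          (fun sa => r sa - lam * Real.log
            (softmax lam (fun s' => qv M r (VinfS M hlam r) s') sa.1 sa.2)) s
        + M.disc * ∑ s', Pmat M (softmax lam fun s'' => qv M r (VinfS M hlam r) s'') s s'
            * VinfS M hlam r s' := by
    intro s
    rw [Tpi_soft_eq M hπ r (VinfS M hlam r) s]
    rw [gibbs_eq hlam (fun s' => qv M r (VinfS M hlam r) s') s]
    exact (VinfS_fixed M hlam r s).symm
  rw [VpiSoft_eq_Vpi]
  exact fixed_eq_Vpi M hπ _ hfix s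

lemma VstarSoft_eq_VinfS (M : MDP S A) {lam : ℝ} (hlam : 0 < lam) (r : S × A → ℝ) (s : S) :
    VstarSoft M lam r s = VinfS M hlam r s := by
  have hπ := isPolicy_softmax lam (fun s' => qv M r (VinfS M hlam r) s')
  haveI : Nonempty {π : S → A → ℝ // IsPolicy π} := ⟨⟨_, hπ⟩⟩
  refine le_antisymm (ciSup_le fun π => VpiSoft_le_VinfS M hlam π.2 r s) ?_
  rw [VinfS_eq_VpiSoft_softmax M hlam r s]
  exact le_ciSup (f := fun π : {π : S → A → ℝ // IsPolicy π} => VpiSoft M lam π.1 r s)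
    ⟨VinfS M hlam r s, by rintro x ⟨π, rfl⟩; exact VpiSoft_le_VinfS M hlam π.2 r s⟩
    ⟨_, hπ⟩

lemma part2 (M : MDP S A) (rE : S × A → ℝ) (πE : S → A → ℝ) (hπE : IsPolicy πE)
    (huniq : ∃ lam : ℝ, 0 < lam ∧ ∀ π, IsPolicy π → π ≠ πE →
        VpiSoft M lam π rE M.s0 < VpiSoft M lam πE rE M.s0)
    (πstar : S → A → ℝ) (hstar : IsPolicy πstar)
    (hopt : ∀ π, IsPolicy π →
      Vpi M π (fun sa => Real.log (πE sa.1 sa.2)) M.s0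
        ≤ Vpi M πstar (fun sa => Real.log (πE sa.1 sa.2)) M.s0) :
    Vpi M πstar rE M.s0 = Vstar M rE M.s0 := by
  obtain ⟨lam, hlam, huniq⟩ := huniq
  have hsm := isPolicy_softmax lam (fun s' => qv M rE (VinfS M hlam rE) s')
  have hEsm : πE = softmax lam (fun s' => qv M rE (VinfS M hlam rE) s') := by
    by_contra hne
    have h1 := huniq _ hsm (fun h => hne h.symm)
    have h2 := VpiSoft_le_VinfS M hlam hπE rE M.s0
    have h3 := VinfS_eq_VpiSoft_softmax M hlam rE M.s0
    linarith
  have hΦ : ∀ sa : S × A, Real.log (πE sa.1 sa.2)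
      = (1/lam) * (rE sa + shape M (VinfS M hlam rE) sa) := by
    intro sa
    obtain ⟨s, a⟩ := sa
    rw [hEsm]
    have hZ : 0 < ∑ a', Real.exp (qv M rE (VinfS M hlam rE) s a' / lam) :=
      Finset.sum_pos (fun _ _ => Real.exp_pos _) Finset.univ_nonempty
    have hlog : Real.log (softmax lam (fun s' => qv M rE (VinfS M hlam rE) s') s a)
        = qv M rE (VinfS M hlam rE) s a / lam
          - Real.log (∑ a', Real.exp (qv M rE (VinfS M hlam rE) s a' / lam)) := by
      unfold softmax
      rw [Real.log_div (Real.exp_ne_zero _) (ne_of_gt hZ), Real.log_exp]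
    have hV : VinfS M hlam rE s
        = lam * Real.log (∑ a', Real.exp (qv M rE (VinfS M hlam rE) s a' / lam)) :=
      (VinfS_fixed M hlam rE s).symm
    have hq : qv M rE (VinfS M hlam rE) s a
        = rE (s, a) + M.disc * ∑ s', M.p s a s' * VinfS M hlam rE s' := rfl
    have hsh : shape M (VinfS M hlam rE) (s, a)
        = M.disc * (∑ s', M.p s a s' * VinfS M hlam rE s') - VinfS M hlam rE s := rfl
    rw [hlog, hsh, hq, hV]
    field_simp
    ring
  have hsur : (fun sa : S × A => Real.log (πE sa.1 sa.2))
      = fun sa => (1/lam) * (rE sa + shape M (VinfS M hlam rE) sa) := funext hΦ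
  rw [hsur] at hopt
  have hlin : ∀ π : S → A → ℝ, IsPolicy π →
      Vpi M π (fun sa => (1/lam) * (rE sa + shape M (VinfS M hlam rE) sa)) M.s0
        = (1/lam) * (Vpi M π rE M.s0 - VinfS M hlam rE M.s0) := by
    intro π hπ
    rw [Vpi_smul_add M hπ (1/lam) rE (shape M (VinfS M hlam rE)) M.s0,
      Vpi_shape M hπ (VinfS M hlam rE) M.s0]
    ring
  refine Vpi_eq_Vstar_of_max M hstar rE ?_
  intro π hπ
  have h4 := hopt π hπ
  rw [hlin π hπ, hlin πstar hstar] at h4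
  have hl : (0:ℝ) < 1/lam := by positivity
  have h5 := (mul_le_mul_iff_right₀ hl).1 h4
  linarith

lemma ciSup_eq_sup' (f : A → ℝ) :
    (⨆ a, f a) = Finset.univ.sup' Finset.univ_nonempty f := by
  apply le_antisymm
  · exact ciSup_le fun a => Finset.le_sup' f (Finset.mem_univ a)
  · exact Finset.sup'_le _ _ fun a _ =>
      le_ciSup (Set.Finite.bddAbove (Set.finite_range f)) a

lemma part3 (M : MDP S A) (rE : S × A → ℝ) (πE : S → A → ℝ) (hπE : IsPolicy πE)
    (hB : ∃ bet : ℝ, 0 < bet ∧ rE ∈ RBIRL M bet πE)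
    (πstar : S → A → ℝ) (hstar : IsPolicy πstar)
    (hopt : ∀ π, IsPolicy π →
      Vpi M π (fun sa => Real.log (πE sa.1 sa.2 / ⨆ a', πE sa.1 a')) M.s0
        ≤ Vpi M πstar (fun sa => Real.log (πE sa.1 sa.2 / ⨆ a', πE sa.1 a')) M.s0) :
    Vpi M πstar rE M.s0 = Vstar M rE M.s0 := by
  obtain ⟨bet, hbet, hBIRL⟩ := hB
  have hBIRL' : ∀ s a, πE s a = Real.exp (Qstar M rE s a / bet)
      / ∑ a', Real.exp (Qstar M rE s a' / bet) := hBIRL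
  have hΦ : ∀ sa : S × A, Real.log (πE sa.1 sa.2 / ⨆ a', πE sa.1 a')
      = (1/bet) * (rE sa + shape M (Vstar M rE) sa) := by
    intro sa
    obtain ⟨s, a⟩ := sa
    have hZ : 0 < ∑ a', Real.exp (Qstar M rE s a' / bet) :=
      Finset.sum_pos (fun _ _ => Real.exp_pos _) Finset.univ_nonempty
    have hmono : Monotone (fun z : ℝ =>
        Real.exp (z / bet) / ∑ a', Real.exp (Qstar M rE s a' / bet)) := by
      intro x y hxy
      exact (div_le_div_iff_of_pos_right hZ).2 (Real.exp_le_exp.2 ((div_le_div_iff_of_pos_right hbet).2 hxy))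
    have hgsup : ∀ x y : ℝ,
        (fun z : ℝ => Real.exp (z / bet) / ∑ a', Real.exp (Qstar M rE s a' / bet)) (x ⊔ y)
          = (fun z : ℝ => Real.exp (z / bet) / ∑ a', Real.exp (Qstar M rE s a' / bet)) x
            ⊔ (fun z : ℝ => Real.exp (z / bet) / ∑ a', Real.exp (Qstar M rE s a' / bet)) y :=
      fun x y => hmono.map_sup x y
    have hsup : (⨆ a', πE s a')
        = Real.exp (Vstar M rE s / bet) / ∑ a', Real.exp (Qstar M rE s a' / bet) := by
      rw [ciSup_eq_sup' (fun a' => πE s a')]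
      have h3 : Finset.univ.sup' Finset.univ_nonempty (fun a' => πE s a')
          = Finset.univ.sup' Finset.univ_nonempty
              ((fun z : ℝ => Real.exp (z / bet) / ∑ a', Real.exp (Qstar M rE s a' / bet))
                ∘ (Qstar M rE s)) :=
        Finset.sup'_congr _ rfl fun a' _ => hBIRL' s a'
      rw [h3, ← Finset.comp_sup'_eq_sup'_comp _ _ hgsup, ← Vstar_bellman]
    have hratio : πE s a / (⨆ a', πE s a')
        = Real.exp ((Qstar M rE s a - Vstar M rE s) / bet) := by
      rw [hBIRL' s a, hsup]
      have h6 : Real.exp (Qstar M rE s a / bet) / (∑ a', Real.exp (Qstar M rE s a' / bet))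
          / (Real.exp (Vstar M rE s / bet) / ∑ a', Real.exp (Qstar M rE s a' / bet))
          = Real.exp (Qstar M rE s a / bet) / Real.exp (Vstar M rE s / bet) := by
        field_simp
      rw [h6, ← Real.exp_sub, ← sub_div]
    show Real.log (πE s a / ⨆ a', πE s a') = _
    rw [hratio, Real.log_exp]
    have hQ : Qstar M rE s a
        = rE (s, a) + M.disc * ∑ s', M.p s a s' * Vstar M rE s' := rfl
    have hsh : shape M (Vstar M rE) (s, a)
        = M.disc * (∑ s', M.p s a s' * Vstar M rE s') - Vstar M rE s := rfl
    rw [hQ, hsh]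
    field_simp
    ring
  have hsur : (fun sa : S × A => Real.log (πE sa.1 sa.2 / ⨆ a', πE sa.1 a'))
      = fun sa => (1/bet) * (rE sa + shape M (Vstar M rE) sa) := funext hΦ
  rw [hsur] at hopt
  have hlin : ∀ π : S → A → ℝ, IsPolicy π →
      Vpi M π (fun sa => (1/bet) * (rE sa + shape M (Vstar M rE) sa)) M.s0
        = (1/bet) * (Vpi M π rE M.s0 - Vstar M rE M.s0) := by
    intro π hπ
    rw [Vpi_smul_add M hπ (1/bet) rE (shape M (Vstar M rE)) M.s0,
      Vpi_shape M hπ (Vstar M rE) M.s0]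
    ring
  refine Vpi_eq_Vstar_of_max M hstar rE ?_
  intro π hπ
  have h4 := hopt π hπ
  rw [hlin π hπ, hlin πstar hstar] at h4
  have hl : (0:ℝ) < 1/bet := by positivity
  have h5 := (mul_le_mul_iff_right₀ hl).1 h4
  linarith

end S10
end S10proof

/-- planning with the reward centroids recovers an optimal policy for the
expert's reward, for the OPT, MCE and BIRL models of behavior. -/
theorem statement10 {S A : Type} [Fintype S] [Fintype A] [DecidableEq S] [DecidableEq A]
    [Nonempty A] (M : MDP S A) (rE : S × A → ℝ) :
    (∀ d : S → A,
      (∀ π, IsPolicy π → Vpi M π rE M.s0 ≤ Vpi M (detPolicy d) rE M.s0) →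
      ∀ πstar, IsPolicy πstar →
        (∀ π, IsPolicy π →
          Vpi M π (rOPTcentroid M d) M.s0 ≤ Vpi M πstar (rOPTcentroid M d) M.s0) →
        Vpi M πstar rE M.s0 = Vstar M rE M.s0) ∧
    (∀ πE : S → A → ℝ, IsPolicy πE → (∀ s a, 0 < πE s a) → supp M πE = Set.univ →
      (∃ lam : ℝ, 0 < lam ∧ ∀ π, IsPolicy π → π ≠ πE →
          VpiSoft M lam π rE M.s0 < VpiSoft M lam πE rE M.s0) →
      ∀ πstar, IsPolicy πstar →
        (∀ π, IsPolicy π →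
          Vpi M π (fun sa => Real.log (πE sa.1 sa.2)) M.s0 ≤
            Vpi M πstar (fun sa => Real.log (πE sa.1 sa.2)) M.s0) →
        Vpi M πstar rE M.s0 = Vstar M rE M.s0) ∧
    (∀ πE : S → A → ℝ, IsPolicy πE → (∀ s a, 0 < πE s a) → supp M πE = Set.univ →
      (∃ bet : ℝ, 0 < bet ∧ rE ∈ RBIRL M bet πE) →
      ∀ πstar, IsPolicy πstar →
        (∀ π, IsPolicy π →
          Vpi M π (fun sa => Real.log (πE sa.1 sa.2 / ⨆ a', πE sa.1 a')) M.s0 ≤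
            Vpi M πstar (fun sa => Real.log (πE sa.1 sa.2 / ⨆ a', πE sa.1 a')) M.s0) →
        Vpi M πstar rE M.s0 = Vstar M rE M.s0) := by
  refine ⟨?_, ?_, ?_⟩
  · intro d hE πstar hstar hopt
    exact S10.part1 M rE d hE πstar hstar hopt
  · intro πE hπE hpos hsupp huniq πstar hstar hopt
    exact S10.part2 M rE πE hπE huniq πstar hstar hopt
  · intro πE hπE hpos hsupp hB πstar hstar hopt
    exact S10.part3 M rE πE hπE hB πstar hstar hopt
end

section
/- Let M = (S, A, s0, p, γ) be a finite discounted MDP without reward and π_E a stochastic policy with S_{M,π_E} = S and π_E(a|s) ≥ π_min' for all (s,a), for a given π_min' > 0. Let ε, δ ∈ (0,1) and H ≥ |S|. Let N i.i.d. trajectories of length H be generated by π_E in M starting at s0; let N(s,a) be the number of trajectories in which state s is visited and, at the first visit to s, action a is played, and N(s) := ∑_a N(s,a). Define π̂(a|s) := max{π_min', N(s,a)/max{1, N(s)}} and r̂(s,a) := log π̂(a|s). If N ≥ 16·log²(4|S||A|/δ) / (ε²·π_min'·p^{min,H}_{M,π_E}), then with probability at least 1−δ, max_{(s,a)} |r̂(s,a)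 − log π_E(a|s)| ≤ ε. -/
open scoped ENNReal

open scoped BigOperators
open MeasureTheory

section Prob

variable {S A : Type} [Fintype S] [Fintype A] [DecidableEq S] [DecidableEq A]

open Classical in
/-- Probability of a length-`H` trajectory under policy `π` started at `M.s0`. -/
noncomputable def trajP (M : MDP S A) (π : S → A → ℝ) {H : ℕ} (τ : Fin H → S × A) : ℝ :=
  ∏ t : Fin H,
    (if _h : (t : ℕ) = 0 then (if (τ t).1 = M.s0 then (1 : ℝ) else 0)
     else M.p (τ ⟨(t : ℕ) - 1, lt_of_le_of_lt (Nat.sub_le _ _) t.isLt⟩).1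
              (τ ⟨(t : ℕ) - 1, lt_of_le_of_lt (Nat.sub_le _ _) t.isLt⟩).2 (τ t).1)
    * π (τ t).1 (τ t).2

/-- Probability of a dataset of `N` i.i.d. trajectories. -/
noncomputable def dataP (M : MDP S A) (π : S → A → ℝ) {N H : ℕ}
    (D : Fin N → Fin H → S × A) : ℝ :=
  ∏ i, trajP M π (D i)

/-- Probability of an event over datasets of `N` i.i.d. length-`H` trajectories. -/
noncomputable def PrD (M : MDP S A) (π : S → A → ℝ) {N H : ℕ}
    (E : Set (Fin N → Fin H → S × A)) : ℝ :=
  ∑ D : Fin N → Fin H → S × A, Set.indicator E (dataP M π) D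

/-- Probability that a length-`H` trajectory visits state `s`. -/
noncomputable def visitP (M : MDP S A) (π : S → A → ℝ) (H : ℕ) (s : S) : ℝ :=
  ∑ τ : Fin H → S × A, Set.indicator {τ' : Fin H → S × A | ∃ t, (τ' t).1 = s} (trajP M π) τ

/-- `p^{min,H}_{M,π}`: minimum over support states of the visiting probability. -/
noncomputable def pminH (M : MDP S A) (π : S → A → ℝ) (H : ℕ) : ℝ :=
  ⨅ s : ↥(supp M π), visitP M π H (s : S)

end Prob

open Classical in
/-- `N(s,a)`: number of trajectories visiting `s` and playing `a` at the first visit. -/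
noncomputable def NsaCount {S A : Type} {N H : ℕ} (D : Fin N → Fin H → S × A)
    (s : S) (a : A) : ℕ :=
  (Finset.univ.filter fun i : Fin N =>
    ∃ t : Fin H, (D i t).1 = s ∧ (D i t).2 = a ∧ ∀ t' : Fin H, t' < t → (D i t').1 ≠ s).card

/-- `N(s) = ∑_a N(s,a)`. -/
noncomputable def NsCount {S A : Type} [Fintype A] {N H : ℕ}
    (D : Fin N → Fin H → S × A) (s : S) : ℕ :=
  ∑ a, NsaCount D s a

/-- The clipped empirical policy `π̂(a|s) = max{π_min', N(s,a)/max{1,N(s)}}`. -/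
noncomputable def pihat {S A : Type} [Fintype A] (πmin' : ℝ) {N H : ℕ}
    (D : Fin N → Fin H → S × A) (s : S) (a : A) : ℝ :=
  max πmin' ((NsaCount D s a : ℝ) / max 1 (NsCount D s : ℝ))

section Aux
variable {S A : Type} [Fintype S] [Fintype A] [DecidableEq S] [DecidableEq A]

open Classical in
/-- Transition weight into the next state, given a prefix. -/
noncomputable def transW (M : MDP S A) : {n : ℕ} → (Fin n → S × A) → S → ℝ
  | 0, _, s' => if s' = M.s0 then 1 else 0
  | (n+1), σ, s' => M.p (σ (Fin.last n)).1 (σ (Fin.last n)).2 s'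

/-- One-step weight of appending `x` to a prefix `σ`. -/
noncomputable def stepW (M : MDP S A) (π : S → A → ℝ) {n : ℕ}
    (σ : Fin n → S × A) (x : S × A) : ℝ :=
  transW M σ x.1 * π x.1 x.2

open Classical in
lemma trajP_eq_prod (M : MDP S A) (π : S → A → ℝ) {n : ℕ} (τ : Fin n → S × A) :
    trajP M π τ = ∏ t : Fin n,
      (if _h : (t : ℕ) = 0 then (if (τ t).1 = M.s0 then (1 : ℝ) else 0)
       else M.p (τ ⟨(t : ℕ) - 1, lt_of_le_of_lt (Nat.sub_le _ _) t.isLt⟩).1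
                (τ ⟨(t : ℕ) - 1, lt_of_le_of_lt (Nat.sub_le _ _) t.isLt⟩).2 (τ t).1)
      * π (τ t).1 (τ t).2 := rfl

lemma trajP_snoc (M : MDP S A) (π : S → A → ℝ) {n : ℕ} (σ : Fin n → S × A) (x : S × A) :
    trajP M π (Fin.snoc σ x) = trajP M π σ * stepW M π σ x := by
  classical
  have hsn : ∀ (i : Fin (n+1)) (h : (i : ℕ) < n), Fin.snoc (α := fun _ => S × A) σ x i = σ ⟨i, h⟩ := by
    intro i h
    have h2 := Fin.snoc_castSucc (α := fun _ => S × A) x σ ⟨(i : ℕ), h⟩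
    have hi : Fin.castSucc (⟨(i : ℕ), h⟩ : Fin n) = i := by ext; rfl
    rwa [hi] at h2
  rw [trajP_eq_prod, trajP_eq_prod, Fin.prod_univ_castSucc]
  congr 1
  · refine Finset.prod_congr rfl fun t _ => ?_
    simp only [Fin.coe_castSucc]
    by_cases h : (t : ℕ) = 0
    · rw [dif_pos h, dif_pos h, Fin.snoc_castSucc]
    · rw [dif_neg h, dif_neg h, Fin.snoc_castSucc,
        hsn ⟨(t : ℕ) - 1, lt_of_le_of_lt (Nat.sub_le _ _) (lt_trans t.isLt (Nat.lt_succ_self n))⟩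
          (lt_of_le_of_lt (Nat.sub_le _ _) t.isLt)]
  · cases n with
    | zero =>
      rw [dif_pos (by simp [Fin.last]), Fin.snoc_last]
      rfl
    | succ m =>
      have hlt : ((Fin.last (m+1) : Fin (m+2)) : ℕ) - 1 < m + 1 := by simp [Fin.last]
      rw [dif_neg (by simp [Fin.last]), Fin.snoc_last, hsn _ hlt]
      rfl

lemma sum_pi_succ {X : Type*} [Fintype X] {n : ℕ} (f : (Fin (n+1) → X) → ℝ) :
    ∑ τ : Fin (n+1) → X, f τ = ∑ σ : Fin n → X, ∑ x : X, f (Fin.snoc σ x) := by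
  rw [← Equiv.sum_comp (Fin.snocEquiv (fun _ => X)) f, Fintype.sum_prod_type]
  rw [Finset.sum_comm]
  refine Finset.sum_congr rfl fun σ _ => Finset.sum_congr rfl fun x _ => rfl

end Aux
section Aux2
variable {S A : Type} [Fintype S] [Fintype A] [DecidableEq S] [DecidableEq A]

lemma transW_nonneg (M : MDP S A) {n : ℕ} (σ : Fin n → S × A) (s' : S) :
    0 ≤ transW M σ s' := by
  cases n with
  | zero => simp only [transW]; split <;> norm_num
  | succ m => exact M.p_nonneg _ _ _

lemma stepW_nonneg (M : MDP S A) {π : S → A → ℝ} (hπ : IsPolicy π) {n : ℕ}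
    (σ : Fin n → S × A) (x : S × A) : 0 ≤ stepW M π σ x :=
  mul_nonneg (transW_nonneg M σ x.1) (hπ.1 _ _)

lemma trajP_nonneg (M : MDP S A) {π : S → A → ℝ} (hπ : IsPolicy π) {n : ℕ}
    (τ : Fin n → S × A) : 0 ≤ trajP M π τ := by
  rw [trajP_eq_prod]
  refine Finset.prod_nonneg fun t _ => mul_nonneg ?_ (hπ.1 _ _)
  split
  · split <;> norm_num
  · exact M.p_nonneg _ _ _

lemma sum_transW (M : MDP S A) {n : ℕ} (σ : Fin n → S × A) :
    ∑ s' : S, transW M σ s' = 1 := by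
  cases n with
  | zero => simp [transW]
  | succ m => exact M.p_sum_one _ _

lemma sum_stepW (M : MDP S A) {π : S → A → ℝ} (hπ : IsPolicy π) {n : ℕ}
    (σ : Fin n → S × A) : ∑ x : S × A, stepW M π σ x = 1 := by
  rw [Fintype.sum_prod_type]
  have h1 : ∀ s' : S, ∑ a, stepW M π σ (s', a) = transW M σ s' := by
    intro s'
    unfold stepW
    show ∑ a, transW M σ s' * π s' a = transW M σ s'
    rw [← Finset.mul_sum, hπ.2 s', mul_one]
  simp only [h1]
  exact sum_transW M σ

lemma sum_trajP (M : MDP S A) {π : S → A → ℝ} (hπ : IsPolicy π) :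
    ∀ n : ℕ, ∑ τ : Fin n → S × A, trajP M π τ = 1 := by
  intro n
  induction n with
  | zero => simp [trajP_eq_prod]
  | succ m ih =>
    rw [sum_pi_succ]
    have h1 : ∀ σ : Fin m → S × A, ∑ x : S × A, trajP M π (Fin.snoc σ x) = trajP M π σ := by
      intro σ
      simp_rw [trajP_snoc]
      rw [← Finset.mul_sum, sum_stepW M hπ σ, mul_one]
    simp only [h1]
    exact ih

lemma marg (M : MDP S A) {π : S → A → ℝ} (hπ : IsPolicy π) {n : ℕ}
    (g : (Fin n → S × A) → ℝ) :
    ∑ τ : Fin (n+1) → S × A, trajP M π τ * g (fun i => τ i.castSucc) =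
      ∑ σ : Fin n → S × A, trajP M π σ * g σ := by
  rw [sum_pi_succ]
  refine Finset.sum_congr rfl fun σ _ => ?_
  have hc : ∀ x : S × A, (fun i => Fin.snoc (α := fun _ => S × A) σ x i.castSucc) = σ :=
    fun x => funext fun i => Fin.snoc_castSucc (α := fun _ => S × A) x σ i
  simp_rw [trajP_snoc, hc]
  have h2 : ∀ x : S × A, trajP M π σ * stepW M π σ x * g σ
      = stepW M π σ x * (trajP M π σ * g σ) := fun x => by ring
  simp_rw [h2]
  rw [← Finset.sum_mul, sum_stepW M hπ σ, one_mul]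

lemma marg_le (M : MDP S A) {π : S → A → ℝ} (hπ : IsPolicy π) {n m : ℕ}
    (h : n ≤ m) (g : (Fin n → S × A) → ℝ) :
    ∑ τ : Fin m → S × A, trajP M π τ * g (fun i => τ (Fin.castLE h i)) =
      ∑ σ : Fin n → S × A, trajP M π σ * g σ := by
  induction m, h using Nat.le_induction with
  | base =>
    have hτ : ∀ τ : Fin n → S × A, (fun i => τ (Fin.castLE le_rfl i)) = τ :=
      fun τ => funext fun i => congrArg τ (Fin.ext rfl)
    simp only [hτ]
  | succ m hm ih =>
    have key := marg M hπ (n := m) (fun σ => g (fun i => σ (Fin.castLE hm i)))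
    have hcomp : ∀ τ : Fin (m+1) → S × A,
        (fun i => (fun j => τ j.castSucc) (Fin.castLE hm i))
          = (fun i => τ (Fin.castLE (Nat.le_succ_of_le hm) i)) := by
      intro τ
      funext i
      exact congrArg τ (Fin.ext rfl)
    simp only [hcomp] at key
    rw [key]
    exact ih

end Aux2
section Aux3
variable {S A : Type} [Fintype S] [Fintype A] [DecidableEq S] [DecidableEq A]

/-- `mP M π t s`: probability that the state at time `t` is `s`. -/
noncomputable def mP (M : MDP S A) (π : S → A → ℝ) (t : ℕ) (s : S) : ℝ :=
  ∑ ρ : Fin t → S × A, trajP M π ρ * transW M ρ s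

lemma mP_nonneg (M : MDP S A) {π : S → A → ℝ} (hπ : IsPolicy π) (t : ℕ) (s : S) :
    0 ≤ mP M π t s :=
  Finset.sum_nonneg fun ρ _ => mul_nonneg (trajP_nonneg M hπ ρ) (transW_nonneg M ρ s)

lemma Pmat_apply (M : MDP S A) (π : S → A → ℝ) (s s' : S) :
    Pmat M π s s' = ∑ a, π s a * M.p s a s' := rfl

lemma Pmat_nonneg (M : MDP S A) {π : S → A → ℝ} (hπ : IsPolicy π) (s s' : S) :
    0 ≤ Pmat M π s s' :=
  Finset.sum_nonneg fun a _ => mul_nonneg (hπ.1 _ _) (M.p_nonneg _ _ _)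

lemma mP_eq_pow (M : MDP S A) {π : S → A → ℝ} (hπ : IsPolicy π) :
    ∀ t s, mP M π t s = (Pmat M π ^ t) M.s0 s := by
  intro t
  induction t with
  | zero =>
    intro s
    simp [mP, trajP_eq_prod, transW, Matrix.one_apply, eq_comm]
  | succ t ih =>
    intro s
    have h1 : mP M π (t+1) s
        = ∑ σ : Fin t → S × A, ∑ x : S × A,
            trajP M π σ * stepW M π σ x * M.p x.1 x.2 s := by
      unfold mP
      rw [sum_pi_succ]
      refine Finset.sum_congr rfl fun σ _ => Finset.sum_congr rfl fun x _ => ?_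
      rw [trajP_snoc]
      congr 1
      show M.p ((Fin.snoc (α := fun _ => S × A) σ x) (Fin.last t)).1
          ((Fin.snoc (α := fun _ => S × A) σ x) (Fin.last t)).2 s = M.p x.1 x.2 s
      rw [Fin.snoc_last]
    have h2 : ∀ σ : Fin t → S × A,
        ∑ x : S × A, trajP M π σ * stepW M π σ x * M.p x.1 x.2 s
          = ∑ s' : S, trajP M π σ * transW M σ s' * ∑ a, π s' a * M.p s' a s := by
      intro σ
      rw [Fintype.sum_prod_type]
      refine Finset.sum_congr rfl fun s' _ => ?_
      rw [Finset.mul_sum]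
      refine Finset.sum_congr rfl fun a _ => ?_
      show trajP M π σ * (transW M σ s' * π s' a) * M.p s' a s
          = trajP M π σ * transW M σ s' * (π s' a * M.p s' a s)
      ring
    rw [h1]
    simp only [h2]
    rw [Finset.sum_comm]
    have h3 : ∀ s' : S, ∑ σ : Fin t → S × A,
        trajP M π σ * transW M σ s' * ∑ a, π s' a * M.p s' a s
          = mP M π t s' * ∑ a, π s' a * M.p s' a s := by
      intro s'
      rw [← Finset.sum_mul]
      rfl
    simp only [h3, ih]
    rw [pow_succ, Matrix.mul_apply]
    rfl

lemma pow_entry_nonneg (M : MDP S A) {π : S → A → ℝ} (hπ : IsPolicy π) (t : ℕ) (s : S) :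
    0 ≤ (Pmat M π ^ t) M.s0 s := by
  rw [← mP_eq_pow M hπ]
  exact mP_nonneg M hπ t s

lemma exists_pow_pos (M : MDP S A) {π : S → A → ℝ} (hπ : IsPolicy π) (s : S)
    (hs : 0 < occ M π s) : ∃ t, 0 < (Pmat M π ^ t) M.s0 s := by
  by_contra h
  push_neg at h
  have hz : ∀ t : ℕ, M.disc ^ t * (Pmat M π ^ t) M.s0 s = 0 := by
    intro t
    have h1 := pow_entry_nonneg M hπ t s
    have h2 := h t
    have : (Pmat M π ^ t) M.s0 s = 0 := le_antisymm h2 h1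
    rw [this, mul_zero]
  have : occ M π s = 0 := by
    unfold occ
    simp only [hz]
    exact tsum_zero
  rw [this] at hs
  exact lt_irrefl 0 hs

/-- Reachability can be witnessed in fewer than `|S|` steps. -/
lemma reach_short (M : MDP S A) {π : S → A → ℝ} (hπ : IsPolicy π) (s : S)
    (h : ∃ t, 0 < (Pmat M π ^ t) M.s0 s) :
    ∃ t, t < Fintype.card S ∧ 0 < (Pmat M π ^ t) M.s0 s := by
  classical
  set R : ℕ → Finset S := fun k =>
    Finset.univ.filter (fun s' => ∃ u ≤ k, 0 < (Pmat M π ^ u) M.s0 s') with hR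
  have hmono' : ∀ {k m : ℕ}, k ≤ m → R k ⊆ R m := by
    intro k m hkm s' hs'
    simp only [hR, Finset.mem_filter, Finset.mem_univ, true_and] at hs' ⊢
    obtain ⟨u, hu, hpos⟩ := hs'
    exact ⟨u, le_trans hu hkm, hpos⟩
  have hmono : ∀ k, R k ⊆ R (k+1) := fun k => hmono' (Nat.le_succ k)
  have hstep : ∀ k, R (k+1) = R k → R (k+2) = R (k+1) := by
    intro k hk
    refine le_antisymm ?_ (hmono (k+1))
    intro s' hs'
    simp only [hR, Finset.mem_filter, Finset.mem_univ, true_and] at hs' ⊢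
    obtain ⟨u, hu, hpos⟩ := hs'
    rcases Nat.lt_or_ge u (k+2) with hu' | hu'
    · exact ⟨u, Nat.lt_succ_iff.mp hu', hpos⟩
    · have hueq : u = k + 2 := le_antisymm hu hu'
      subst hueq
      rw [pow_succ, Matrix.mul_apply] at hpos
      obtain ⟨s'', _, hterm⟩ := Finset.exists_lt_of_sum_lt (by
        simpa using hpos : ∑ s'' : S, (0:ℝ) < ∑ s'' : S, (Pmat M π ^ (k+1)) M.s0 s'' * Pmat M π s'' s')
      have h1 : 0 < (Pmat M π ^ (k+1)) M.s0 s'' * Pmat M π s'' s' := hterm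
      have hp1 : 0 < (Pmat M π ^ (k+1)) M.s0 s'' :=
        lt_of_le_of_ne (pow_entry_nonneg M hπ _ _) (by
          intro hzero
          rw [← hzero] at h1
          simp at h1)
      have hp2 : 0 < Pmat M π s'' s' := by
        by_contra hc
        push_neg at hc
        have := mul_nonpos_of_nonneg_of_nonpos (pow_entry_nonneg M hπ (k+1) s'') hc
        exact absurd h1 (not_lt.mpr this)
      have hs'' : s'' ∈ R k := by
        rw [← hk]
        simp only [hR, Finset.mem_filter, Finset.mem_univ, true_and]
        exact ⟨k+1, le_rfl, hp1⟩
      simp only [hR, Finset.mem_filter, Finset.mem_univ, true_and] at hs''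
      obtain ⟨u', hu', hpos'⟩ := hs''
      refine ⟨u' + 1, Nat.succ_le_succ hu', ?_⟩
      rw [pow_succ, Matrix.mul_apply]
      have hterm' : 0 < (Pmat M π ^ u') M.s0 s'' * Pmat M π s'' s' := mul_pos hpos' hp2
      refine lt_of_lt_of_le hterm' (Finset.single_le_sum (f := fun j => (Pmat M π ^ u') M.s0 j * Pmat M π j s')
        (fun j _ => mul_nonneg (pow_entry_nonneg M hπ u' j) (Pmat_nonneg M hπ j s')) (Finset.mem_univ s''))
  have hfix : ∀ k, R (k+1) = R k → ∀ m, R (k + m) = R k := by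
    intro k hk m
    induction m with
    | zero => rfl
    | succ m ih =>
      have hq : ∀ j, R (k + j + 1) = R (k + j) := by
        intro j
        induction j with
        | zero => exact hk
        | succ j ihj => exact hstep (k + j) ihj
      rw [show k + (m+1) = (k + m) + 1 from rfl, hq m, ih]
  -- pigeonhole: some k < card S with R (k+1) = R k
  have hcard : ∀ k, (∀ j < k, R (j+1) ≠ R j) → k + 1 ≤ (R k).card := by
    intro k
    induction k with
    | zero =>
      intro _
      have : M.s0 ∈ R 0 := by
        simp only [hR, Finset.mem_filter, Finset.mem_univ, true_and]
        exact ⟨0, le_rfl, by simp [Matrix.one_apply]⟩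
      exact Finset.card_pos.mpr ⟨M.s0, this⟩
    | succ k ih =>
      intro hj
      have h1 : k + 1 ≤ (R k).card := ih fun j hjk => hj j (Nat.lt_succ_of_lt hjk)
      have h2 : R k ⊂ R (k+1) := by
        refine Finset.ssubset_iff_subset_ne.mpr ⟨hmono k, ?_⟩
        intro hc
        exact hj k (Nat.lt_succ_self k) hc.symm
      have := Finset.card_lt_card h2
      omega
  have hex : ∃ k < Fintype.card S, R (k+1) = R k := by
    by_contra hc
    push_neg at hc
    have h1 := hcard (Fintype.card S) (fun j hj => hc j hj)
    have h2 : (R (Fintype.card S)).card ≤ Fintype.card S := Finset.card_le_univ _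
    omega
  obtain ⟨k, hk, hfixk⟩ := hex
  obtain ⟨t, hts⟩ := h
  have hsR : s ∈ R t := by
    simp only [hR, Finset.mem_filter, Finset.mem_univ, true_and]
    exact ⟨t, le_rfl, hts⟩
  have hsRk : s ∈ R k := by
    have h1 : s ∈ R (k + t) := hmono' (Nat.le_add_left t k) hsR
    rwa [hfix k hfixk t] at h1
  simp only [hR, Finset.mem_filter, Finset.mem_univ, true_and] at hsRk
  obtain ⟨u, hu, hpos⟩ := hsRk
  exact ⟨u, lt_of_le_of_lt hu hk, hpos⟩

end Aux3

section Aux4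
variable {S A : Type} [Fintype S] [Fintype A] [DecidableEq S] [DecidableEq A]

/-- Core first-visit decomposition lemma. -/
lemma fv_core (M : MDP S A) {π : S → A → ℝ} (hπ : IsPolicy π) {H : ℕ} (t : Fin H)
    (s : S) (F : A → Prop) [DecidablePred F] :
    ∑ τ : Fin H → S × A,
      (if ((τ t).1 = s ∧ F (τ t).2 ∧ ∀ t' : Fin H, t' < t → (τ t').1 ≠ s)
        then trajP M π τ else 0)
    = (∑ a' : A, if F a' then π s a' else 0) *
      ∑ ρ : Fin (t : ℕ) → S × A,
        (if (∀ u : Fin (t : ℕ), (ρ u).1 ≠ s) then trajP M π ρ * transW M ρ s else 0) := by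
  classical
  set n := (t : ℕ) with hn
  have hℓ : n + 1 ≤ H := t.isLt
  set G01 : (Fin (n+1) → S × A) → ℝ := fun σ =>
    if ((σ (Fin.last n)).1 = s ∧ F (σ (Fin.last n)).2 ∧ ∀ u : Fin n, (σ u.castSucc).1 ≠ s)
    then 1 else 0 with hG
  have stepA : ∀ τ : Fin H → S × A,
      (if ((τ t).1 = s ∧ F (τ t).2 ∧ ∀ t' : Fin H, t' < t → (τ t').1 ≠ s)
        then trajP M π τ else 0)
      = trajP M π τ * G01 (fun i => τ (Fin.castLE hℓ i)) := by
    intro τ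
    have hlast : (fun i => τ (Fin.castLE hℓ i)) (Fin.last n) = τ t :=
      congrArg τ (Fin.ext (by simp [Fin.last, hn]))
    have hiff : ((τ t).1 = s ∧ F (τ t).2 ∧ ∀ t' : Fin H, t' < t → (τ t').1 ≠ s)
        ↔ (((fun i => τ (Fin.castLE hℓ i)) (Fin.last n)).1 = s
            ∧ F ((fun i => τ (Fin.castLE hℓ i)) (Fin.last n)).2
            ∧ ∀ u : Fin n, ((fun i => τ (Fin.castLE hℓ i)) u.castSucc).1 ≠ s) := by
      rw [hlast]
      constructor
      · rintro ⟨h1, h2, h3⟩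
        refine ⟨h1, h2, fun u => ?_⟩
        have hu : (Fin.castLE hℓ u.castSucc) < t := by
          rw [Fin.lt_def]
          exact u.isLt
        exact h3 _ hu
      · rintro ⟨h1, h2, h3⟩
        refine ⟨h1, h2, fun t' hlt => ?_⟩
        have hv : (t' : ℕ) < n := by rw [Fin.lt_def] at hlt; exact hlt
        have := h3 ⟨(t' : ℕ), hv⟩
        have heq : (Fin.castLE hℓ (Fin.castSucc ⟨(t' : ℕ), hv⟩)) = t' := Fin.ext rfl
        have this2 : (τ (Fin.castLE hℓ (Fin.castSucc ⟨(t' : ℕ), hv⟩))).1 ≠ s := this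
        rwa [heq] at this2
    rw [hG]
    by_cases hcond : ((τ t).1 = s ∧ F (τ t).2 ∧ ∀ t' : Fin H, t' < t → (τ t').1 ≠ s)
    · rw [if_pos hcond]
      simp only []
      rw [if_pos (hiff.mp hcond), mul_one]
    · rw [if_neg hcond]
      simp only []
      rw [if_neg (fun h => hcond (hiff.mpr h)), mul_zero]
  simp only [stepA]
  rw [marg_le M hπ hℓ G01, sum_pi_succ]
  have stepC : ∀ ρ : Fin n → S × A,
      ∑ x : S × A, trajP M π (Fin.snoc ρ x) * G01 (Fin.snoc ρ x)
      = (∑ a' : A, if F a' then π s a' else 0) *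
          (if (∀ u : Fin n, (ρ u).1 ≠ s) then trajP M π ρ * transW M ρ s else 0) := by
    intro ρ
    have hG2 : ∀ x : S × A, G01 (Fin.snoc ρ x)
        = if (x.1 = s ∧ F x.2 ∧ ∀ u : Fin n, (ρ u).1 ≠ s) then 1 else 0 := by
      intro x
      rw [hG]
      simp only [Fin.snoc_last, Fin.snoc_castSucc]
    simp only [hG2, trajP_snoc]
    by_cases hav : ∀ u : Fin n, (ρ u).1 ≠ s
    · rw [if_pos hav]
      have h4 : ∀ x : S × A,
          trajP M π ρ * stepW M π ρ x * (if (x.1 = s ∧ F x.2 ∧ ∀ u : Fin n, (ρ u).1 ≠ s) then 1 else 0)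
          = (if x.1 = s then (if F x.2 then trajP M π ρ * transW M ρ s * π s x.2 else 0) else 0) := by
        intro x
        by_cases h1 : x.1 = s
        · by_cases h2 : F x.2
          · rw [if_pos ⟨h1, h2, hav⟩, if_pos h1, if_pos h2, mul_one]
            unfold stepW
            rw [h1]
            ring
          · rw [if_neg (fun h => h2 h.2.1), if_pos h1, if_neg h2, mul_zero]
        · rw [if_neg (fun h => h1 h.1), if_neg h1, mul_zero]
      simp only [h4]
      rw [Fintype.sum_prod_type]
      dsimp only
      have h5 : ∀ x : S,
          (∑ y : A, if x = s then (if F y then trajP M π ρ * transW M ρ s * π s y else 0) else 0)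
          = if x = s then (∑ y : A, if F y then trajP M π ρ * transW M ρ s * π s y else 0)
            else 0 := by
        intro x
        by_cases hx : x = s
        · simp [hx]
        · simp [hx]
      have h6 : ∀ x : S,
          (∑ y : A, if (x = s) then (if F y then trajP M π ρ * transW M ρ s * π s y else 0) else 0)
          = (∑ y : A, if (x = s) then (if F y then trajP M π ρ * transW M ρ s * π s y else 0) else 0) := fun _ => rfl
      calc (∑ x : S, ∑ y : A, if x = s then (if F y then trajP M π ρ * transW M ρ s * π s y else 0) else 0)
          = ∑ x : S, if x = s then (∑ y : A, if F y then trajP M π ρ * transW M ρ s * π s y else 0) else 0 := Finset.sum_congr rfl fun x _ => h5 x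
        _ = ∑ y : A, if F y then trajP M π ρ * transW M ρ s * π s y else 0 := by
            rw [Finset.sum_ite_eq' Finset.univ s
              (fun _ => ∑ y : A, if F y then trajP M π ρ * transW M ρ s * π s y else 0),
              if_pos (Finset.mem_univ s)]
        _ = (∑ a' : A, if F a' then π s a' else 0) * (trajP M π ρ * transW M ρ s) := by
            rw [Finset.sum_mul]
            refine Finset.sum_congr rfl fun a' _ => ?_
            by_cases hF : F a'
            · rw [if_pos hF, if_pos hF]
              ring
            · rw [if_neg hF, if_neg hF, zero_mul]
    · rw [if_neg hav, mul_zero]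
      refine Finset.sum_eq_zero fun x _ => ?_
      rw [if_neg (fun h => hav h.2.2), mul_zero]
  simp only [stepC]
  rw [← Finset.mul_sum]

end Aux4
section Aux5
variable {S A : Type} [Fintype S] [Fintype A] [DecidableEq S] [DecidableEq A]

open Classical in
/-- Probability of visiting `s` and playing `a` at the first visit. -/
noncomputable def qProb (M : MDP S A) (π : S → A → ℝ) (H : ℕ) (s : S) (a : A) : ℝ :=
  ∑ τ : Fin H → S × A,
    (if (∃ t : Fin H, (τ t).1 = s ∧ (τ t).2 = a ∧ ∀ t' : Fin H, t' < t → (τ t').1 ≠ s)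
      then trajP M π τ else 0)

open Classical in
/-- Probability of visiting `s`. -/
noncomputable def pProb (M : MDP S A) (π : S → A → ℝ) (H : ℕ) (s : S) : ℝ :=
  ∑ τ : Fin H → S × A, (if (∃ t : Fin H, (τ t).1 = s) then trajP M π τ else 0)

open Classical in
lemma ite_exists_eq_sum {ι : Type*} [Fintype ι] (P : ι → Prop)
    (huniq : ∀ i j, P i → P j → i = j) (w : ℝ) :
    (if ∃ i, P i then w else 0) = ∑ i, if P i then w else 0 := by
  by_cases h : ∃ i, P i
  · obtain ⟨i, hi⟩ := h
    rw [if_pos ⟨i, hi⟩,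
      Fintype.sum_eq_single i (fun j hj => if_neg fun hPj => hj (huniq j i hPj hi)), if_pos hi]
  · rw [if_neg h]
    exact (Finset.sum_eq_zero fun i _ => if_neg fun hPi => h ⟨i, hPi⟩).symm

lemma fv_uniq {H : ℕ} (τ : Fin H → S × A) (s : S) {t t' : Fin H}
    (h1 : (τ t).1 = s) (h1' : (τ t').1 = s)
    (h3 : ∀ u : Fin H, u < t → (τ u).1 ≠ s) (h3' : ∀ u : Fin H, u < t' → (τ u).1 ≠ s) :
    t = t' := by
  rcases lt_trichotomy t t' with h | h | h
  · exact absurd h1 (h3' t h)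
  · exact h
  · exact absurd h1' (h3 t' h)

lemma first_exists {H : ℕ} (τ : Fin H → S × A) (s : S) :
    (∃ t : Fin H, (τ t).1 = s)
      ↔ (∃ t : Fin H, (τ t).1 = s ∧ True ∧ ∀ t' : Fin H, t' < t → (τ t').1 ≠ s) := by
  classical
  constructor
  · rintro ⟨t0, ht0⟩
    obtain ⟨t, htmem, hmin⟩ := Finset.exists_min_image
      (Finset.univ.filter fun t => (τ t).1 = s) id
      ⟨t0, Finset.mem_filter.mpr ⟨Finset.mem_univ _, ht0⟩⟩
    refine ⟨t, (Finset.mem_filter.mp htmem).2, trivial, fun t' hlt hs' => ?_⟩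
    have := hmin t' (Finset.mem_filter.mpr ⟨Finset.mem_univ _, hs'⟩)
    exact absurd hlt (not_lt.mpr this)
  · rintro ⟨t, ht, _, _⟩
    exact ⟨t, ht⟩

lemma qProb_eq_mul (M : MDP S A) {π : S → A → ℝ} (hπ : IsPolicy π) (H : ℕ) (s : S) (a : A) :
    qProb M π H s a = π s a * pProb M π H s := by
  classical
  have hq : qProb M π H s a = ∑ t : Fin H, ∑ τ : Fin H → S × A,
      (if ((τ t).1 = s ∧ (τ t).2 = a ∧ ∀ t' : Fin H, t' < t → (τ t').1 ≠ s)
        then trajP M π τ else 0) := by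
    unfold qProb
    have h1 : ∀ τ : Fin H → S × A,
        (if (∃ t : Fin H, (τ t).1 = s ∧ (τ t).2 = a ∧ ∀ t' : Fin H, t' < t → (τ t').1 ≠ s)
          then trajP M π τ else 0)
        = ∑ t : Fin H, (if ((τ t).1 = s ∧ (τ t).2 = a ∧ ∀ t' : Fin H, t' < t → (τ t').1 ≠ s)
            then trajP M π τ else 0) := by
      intro τ
      by_cases h : ∃ t : Fin H, (τ t).1 = s ∧ (τ t).2 = a ∧ ∀ t' : Fin H, t' < t → (τ t').1 ≠ s
      · obtain ⟨i, hi⟩ := h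
        rw [if_pos ⟨i, hi⟩, Fintype.sum_eq_single i
          (fun j hj => if_neg fun hPj => hj (fv_uniq τ s hPj.1 hi.1 hPj.2.2 hi.2.2)), if_pos hi]
      · rw [if_neg h]
        exact (Finset.sum_eq_zero fun i _ => if_neg fun hPi => h ⟨i, hPi⟩).symm
    simp only [h1]
    rw [Finset.sum_comm]
  have hp : pProb M π H s = ∑ t : Fin H, ∑ τ : Fin H → S × A,
      (if ((τ t).1 = s ∧ True ∧ ∀ t' : Fin H, t' < t → (τ t').1 ≠ s)
        then trajP M π τ else 0) := by
    unfold pProb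
    have h0 : ∀ τ : Fin H → S × A,
        (if (∃ t : Fin H, (τ t).1 = s) then trajP M π τ else 0)
        = ∑ t : Fin H, (if ((τ t).1 = s ∧ True ∧ ∀ t' : Fin H, t' < t → (τ t').1 ≠ s)
            then trajP M π τ else 0) := by
      intro τ
      rw [if_congr (first_exists τ s) rfl rfl]
      by_cases h : ∃ t : Fin H, (τ t).1 = s ∧ True ∧ ∀ t' : Fin H, t' < t → (τ t').1 ≠ s
      · obtain ⟨i, hi⟩ := h
        rw [if_pos ⟨i, hi⟩, Fintype.sum_eq_single i
          (fun j hj => if_neg fun hPj => hj (fv_uniq τ s hPj.1 hi.1 hPj.2.2 hi.2.2)), if_pos hi]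
      · rw [if_neg h]
        exact (Finset.sum_eq_zero fun i _ => if_neg fun hPi => h ⟨i, hPi⟩).symm
    simp only [h0]
    rw [Finset.sum_comm]
  rw [hq, hp, Finset.mul_sum]
  refine Finset.sum_congr rfl fun t _ => ?_
  have hCq := fv_core M hπ t s (fun a' => a' = a)
  have hCp := fv_core M hπ t s (fun _ => True)
  have e1 : (∑ a' : A, if a' = a then π s a' else 0) = π s a := by
    rw [Finset.sum_ite_eq' Finset.univ a (fun a' => π s a'), if_pos (Finset.mem_univ a)]
  have e2 : (∑ a' : A, if True then π s a' else 0) = 1 := by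
    simp [hπ.2 s]
  rw [e1] at hCq
  rw [e2, one_mul] at hCp
  rw [← hCp] at hCq
  exact hCq

lemma pProb_eq_visitP (M : MDP S A) (π : S → A → ℝ) (H : ℕ) (s : S) :
    pProb M π H s = visitP M π H s := by
  classical
  unfold pProb visitP
  refine Finset.sum_congr rfl fun τ _ => ?_
  by_cases h : ∃ t : Fin H, (τ t).1 = s
  · rw [if_pos h, Set.indicator_of_mem
      (show τ ∈ {τ' : Fin H → S × A | ∃ t', (τ' t').1 = s} from h)]
  · rw [if_neg h, Set.indicator_of_notMem
      (show τ ∉ {τ' : Fin H → S × A | ∃ t', (τ' t').1 = s} from h)]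

open Classical in
lemma sum_ite_last (M : MDP S A) {π : S → A → ℝ} (hπ : IsPolicy π) (t : ℕ) (s : S) :
    ∑ σ : Fin (t+1) → S × A, (if (σ (Fin.last t)).1 = s then trajP M π σ else 0)
      = mP M π t s := by
  rw [sum_pi_succ]
  refine Finset.sum_congr rfl fun ρ _ => ?_
  have h1 : ∀ x : S × A,
      (if (Fin.snoc (α := fun _ => S × A) ρ x (Fin.last t)).1 = s
        then trajP M π (Fin.snoc ρ x) else 0)
      = if x.1 = s then trajP M π ρ * stepW M π ρ x else 0 := by
    intro x
    rw [Fin.snoc_last, trajP_snoc]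
  simp only [h1]
  rw [Fintype.sum_prod_type]
  dsimp only
  have h2 : ∀ s' : S, (∑ a' : A, if s' = s then trajP M π ρ * stepW M π ρ (s', a') else 0)
      = if s' = s then trajP M π ρ * transW M ρ s' else 0 := by
    intro s'
    by_cases hs' : s' = s
    · rw [if_pos hs']
      have : ∀ a' : A, (if s' = s then trajP M π ρ * stepW M π ρ (s', a') else 0)
          = trajP M π ρ * (transW M ρ s' * π s' a') := fun a' => if_pos hs'
      simp only [this]
      have h3 : ∀ a' : A, trajP M π ρ * (transW M ρ s' * π s' a')
          = trajP M π ρ * transW M ρ s' * π s' a' := fun a' => by ring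
      simp only [h3]
      rw [← Finset.mul_sum, hπ.2 s', mul_one]
    · rw [if_neg hs']
      exact Finset.sum_eq_zero fun a' _ => if_neg hs'
  simp only [h2]
  rw [Finset.sum_ite_eq' Finset.univ s (fun s' => trajP M π ρ * transW M ρ s'),
    if_pos (Finset.mem_univ s)]

lemma visitP_pos (M : MDP S A) {π : S → A → ℝ} (hπ : IsPolicy π) {H : ℕ}
    (hH : Fintype.card S ≤ H) (s : S) (hs : 0 < occ M π s) : 0 < visitP M π H s := by
  classical
  obtain ⟨t, htcard, hpos⟩ := reach_short M hπ s (exists_pow_pos M hπ s hs)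
  rw [← mP_eq_pow M hπ] at hpos
  have htH : t + 1 ≤ H := le_trans (Nat.succ_le_of_lt htcard) hH
  set G : (Fin (t+1) → S × A) → ℝ :=
    fun σ => if (σ (Fin.last t)).1 = s then (1:ℝ) else 0 with hGdef
  have key := marg_le M hπ htH G
  have hrhs : ∑ σ : Fin (t+1) → S × A, trajP M π σ * G σ = mP M π t s := by
    rw [← sum_ite_last M hπ t s]
    refine Finset.sum_congr rfl fun σ _ => ?_
    simp only [hGdef]
    by_cases hc : (σ (Fin.last t)).1 = s
    · rw [if_pos hc, if_pos hc, mul_one]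
    · rw [if_neg hc, if_neg hc, mul_zero]
  have hle : ∑ τ : Fin H → S × A, trajP M π τ * G (fun i => τ (Fin.castLE htH i))
      ≤ visitP M π H s := by
    unfold visitP
    refine Finset.sum_le_sum fun τ _ => ?_
    simp only [hGdef]
    by_cases hc : (τ (Fin.castLE htH (Fin.last t))).1 = s
    · have hmem : τ ∈ {τ' : Fin H → S × A | ∃ t', (τ' t').1 = s} := ⟨_, hc⟩
      rw [Set.indicator_of_mem hmem]
      simp only [if_pos hc, mul_one]
      exact le_rfl
    · simp only [if_neg hc, mul_zero]
      exact Set.indicator_nonneg (fun τ' _ => trajP_nonneg M hπ τ') τ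
  rw [hrhs] at key
  rw [← key] at hpos
  exact lt_of_lt_of_le hpos hle

lemma pminH_le (M : MDP S A) (π : S → A → ℝ) (H : ℕ) (hsupp : supp M π = Set.univ)
    (s : S) : pminH M π H ≤ visitP M π H s := by
  have hmem : s ∈ supp M π := by rw [hsupp]; trivial
  have hbdd : BddBelow (Set.range fun s' : ↥(supp M π) => visitP M π H (s' : S)) :=
    Set.Finite.bddBelow (Set.finite_range _)
  exact ciInf_le hbdd ⟨s, hmem⟩

lemma pminH_pos (M : MDP S A) {π : S → A → ℝ} (hπ : IsPolicy π)
    (hsupp : supp M π = Set.univ) {H : ℕ} (hH : Fintype.card S ≤ H) :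
    0 < pminH M π H := by
  have hocc : ∀ s : S, 0 < occ M π s := by
    intro s
    have : s ∈ supp M π := by rw [hsupp]; trivial
    exact this
  have hne : Nonempty ↥(supp M π) := ⟨⟨M.s0, by rw [hsupp]; trivial⟩⟩
  obtain ⟨s₀, hs₀⟩ := Finite.exists_min (fun s' : ↥(supp M π) => visitP M π H (s' : S))
  have hpos : 0 < visitP M π H (s₀ : S) := visitP_pos M hπ hH _ (hocc _)
  exact lt_of_lt_of_le hpos (le_ciInf hs₀)

end Aux5
section Chernoff
variable {T : Type} [Fintype T]

lemma sum_prod_eq_pow {N : ℕ} (f : T → ℝ) :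
    ∑ D : Fin N → T, (∏ i, f (D i)) = (∑ τ, f τ) ^ N := by
  classical
  have h := Finset.prod_univ_sum (fun _ : Fin N => (Finset.univ : Finset T)) (fun _ τ => f τ)
  rw [Fintype.piFinset_univ] at h
  rw [← h, Finset.prod_const, Finset.card_univ, Fintype.card_fin]

lemma count_cast (e : T → Prop) [DecidablePred e] {N : ℕ} (D : Fin N → T) :
    ((Finset.univ.filter fun i => e (D i)).card : ℝ)
      = ∑ i : Fin N, (if e (D i) then (1:ℝ) else 0) := by
  rw [Finset.card_filter]
  push_cast
  rfl

lemma exp_count_prod (w : T → ℝ) (e : T → Prop) [DecidablePred e] {N : ℕ} (θ : ℝ)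
    (D : Fin N → T) :
    Real.exp (θ * ((Finset.univ.filter fun i => e (D i)).card : ℝ)) * ∏ i, w (D i)
      = ∏ i, (w (D i) * Real.exp (θ * (if e (D i) then (1:ℝ) else 0))) := by
  rw [count_cast, Finset.mul_sum, Real.exp_sum, Finset.prod_mul_distrib]
  ring

lemma mgf_sum (w : T → ℝ) (hw1 : ∑ τ, w τ = 1) (e : T → Prop) [DecidablePred e] (θ : ℝ) :
    ∑ τ, (w τ * Real.exp (θ * (if e τ then (1:ℝ) else 0)))
      = 1 + (∑ τ, if e τ then w τ else 0) * (Real.exp θ - 1) := by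
  have h : ∀ τ, w τ * Real.exp (θ * (if e τ then (1:ℝ) else 0))
      = w τ + (Real.exp θ - 1) * (if e τ then w τ else 0) := by
    intro τ
    by_cases hτ : e τ
    · rw [if_pos hτ, if_pos hτ, mul_one]
      ring
    · rw [if_neg hτ, if_neg hτ, mul_zero, Real.exp_zero]
      ring
  simp only [h]
  rw [Finset.sum_add_distrib, hw1, ← Finset.mul_sum]
  ring

lemma chernoff_core (w : T → ℝ) (hw1 : ∑ τ, w τ = 1)
    (e : T → Prop) [DecidablePred e] {N : ℕ} (θ : ℝ)
    (hbase : 0 ≤ 1 + (∑ τ, if e τ then w τ else 0) * (Real.exp θ - 1)) :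
    ∑ D : Fin N → T, Real.exp (θ * ((Finset.univ.filter fun i => e (D i)).card : ℝ))
        * ∏ i, w (D i)
      ≤ Real.exp ((N : ℝ) * (∑ τ, if e τ then w τ else 0) * (Real.exp θ - 1)) := by
  have h2 : ∑ D : Fin N → T, Real.exp (θ * ((Finset.univ.filter fun i => e (D i)).card : ℝ))
      * ∏ i, w (D i)
      = (1 + (∑ τ, if e τ then w τ else 0) * (Real.exp θ - 1)) ^ N := by
    calc ∑ D : Fin N → T, Real.exp (θ * ((Finset.univ.filter fun i => e (D i)).card : ℝ))
        * ∏ i, w (D i)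
        = ∑ D : Fin N → T, ∏ i, (w (D i) * Real.exp (θ * (if e (D i) then (1:ℝ) else 0))) :=
          Finset.sum_congr rfl fun D _ => exp_count_prod w e θ D
      _ = (∑ τ, (w τ * Real.exp (θ * (if e τ then (1:ℝ) else 0)))) ^ N :=
          sum_prod_eq_pow (fun τ => w τ * Real.exp (θ * (if e τ then (1:ℝ) else 0)))
      _ = (1 + (∑ τ, if e τ then w τ else 0) * (Real.exp θ - 1)) ^ N := by
          rw [mgf_sum w hw1 e θ]
  rw [h2]
  have hle : 1 + (∑ τ, if e τ then w τ else 0) * (Real.exp θ - 1)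
      ≤ Real.exp ((∑ τ, if e τ then w τ else 0) * (Real.exp θ - 1)) := by
    have := Real.add_one_le_exp ((∑ τ, if e τ then w τ else 0) * (Real.exp θ - 1))
    linarith
  calc (1 + (∑ τ, if e τ then w τ else 0) * (Real.exp θ - 1)) ^ N
      ≤ (Real.exp ((∑ τ, if e τ then w τ else 0) * (Real.exp θ - 1))) ^ N :=
        pow_le_pow_left₀ hbase hle N
    _ = Real.exp ((N : ℝ) * ((∑ τ, if e τ then w τ else 0) * (Real.exp θ - 1))) := by
        rw [← Real.exp_nat_mul]
    _ = Real.exp ((N : ℝ) * (∑ τ, if e τ then w τ else 0) * (Real.exp θ - 1)) := by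
        rw [mul_assoc]

/-- Upper-tail Chernoff bound. -/
lemma chernoff_up (w : T → ℝ) (hw0 : ∀ τ, 0 ≤ w τ) (hw1 : ∑ τ, w τ = 1)
    (e : T → Prop) [DecidablePred e] {N : ℕ} (θ k : ℝ) (hθ : 0 ≤ θ) :
    ∑ D : Fin N → T, (if k ≤ ((Finset.univ.filter fun i => e (D i)).card : ℝ)
        then ∏ i, w (D i) else 0)
      ≤ Real.exp (-(θ * k) + (N : ℝ) * (∑ τ, if e τ then w τ else 0) * (Real.exp θ - 1)) := by
  have hμ0 : 0 ≤ ∑ τ, if e τ then w τ else 0 :=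
    Finset.sum_nonneg fun τ _ => by split <;> [exact hw0 τ; exact le_rfl]
  have hbase : 0 ≤ 1 + (∑ τ, if e τ then w τ else 0) * (Real.exp θ - 1) := by
    have : (1:ℝ) ≤ Real.exp θ := Real.one_le_exp hθ
    nlinarith
  have hpt : ∀ D : Fin N → T,
      (if k ≤ ((Finset.univ.filter fun i => e (D i)).card : ℝ) then ∏ i, w (D i) else 0)
      ≤ Real.exp (-(θ * k)) * (Real.exp (θ * ((Finset.univ.filter
          fun i => e (D i)).card : ℝ)) * ∏ i, w (D i)) := by
    intro D
    have hprod : 0 ≤ ∏ i, w (D i) := Finset.prod_nonneg fun i _ => hw0 _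
    by_cases hc : k ≤ ((Finset.univ.filter fun i => e (D i)).card : ℝ)
    · rw [if_pos hc]
      have h1 : (1:ℝ) ≤ Real.exp (-(θ * k)) * Real.exp (θ * ((Finset.univ.filter
          fun i => e (D i)).card : ℝ)) := by
        rw [← Real.exp_add]
        apply Real.one_le_exp
        nlinarith
      nlinarith [mul_nonneg (sub_nonneg.mpr h1) hprod]
    · rw [if_neg hc]
      positivity
  calc ∑ D : Fin N → T, (if k ≤ ((Finset.univ.filter fun i => e (D i)).card : ℝ)
        then ∏ i, w (D i) else 0)
      ≤ ∑ D : Fin N → T, Real.exp (-(θ * k)) * (Real.exp (θ * ((Finset.univ.filter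
          fun i => e (D i)).card : ℝ)) * ∏ i, w (D i)) := Finset.sum_le_sum fun D _ => hpt D
    _ = Real.exp (-(θ * k)) * ∑ D : Fin N → T, Real.exp (θ * ((Finset.univ.filter
          fun i => e (D i)).card : ℝ)) * ∏ i, w (D i) := by rw [Finset.mul_sum]
    _ ≤ Real.exp (-(θ * k)) * Real.exp ((N : ℝ) * (∑ τ, if e τ then w τ else 0)
          * (Real.exp θ - 1)) :=
        mul_le_mul_of_nonneg_left (chernoff_core w hw1 e θ hbase) (le_of_lt (Real.exp_pos _))
    _ = Real.exp (-(θ * k) + (N : ℝ) * (∑ τ, if e τ then w τ else 0) * (Real.exp θ - 1)) := by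
        rw [← Real.exp_add]

/-- Lower-tail Chernoff bound. -/
lemma chernoff_low (w : T → ℝ) (hw0 : ∀ τ, 0 ≤ w τ) (hw1 : ∑ τ, w τ = 1)
    (e : T → Prop) [DecidablePred e] {N : ℕ} (θ k : ℝ) (hθ : 0 ≤ θ) :
    ∑ D : Fin N → T, (if ((Finset.univ.filter fun i => e (D i)).card : ℝ) ≤ k
        then ∏ i, w (D i) else 0)
      ≤ Real.exp (θ * k + (N : ℝ) * (∑ τ, if e τ then w τ else 0) * (Real.exp (-θ) - 1)) := by
  have hμ0 : 0 ≤ ∑ τ, if e τ then w τ else 0 :=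
    Finset.sum_nonneg fun τ _ => by split <;> [exact hw0 τ; exact le_rfl]
  have hμ1 : (∑ τ, if e τ then w τ else 0) ≤ 1 := by
    rw [← hw1]
    refine Finset.sum_le_sum fun τ _ => ?_
    split <;> [exact le_rfl; exact hw0 τ]
  have hbase : 0 ≤ 1 + (∑ τ, if e τ then w τ else 0) * (Real.exp (-θ) - 1) := by
    have h1 : Real.exp (-θ) ≤ 1 := Real.exp_le_one_iff.mpr (by linarith)
    have h2 : 0 < Real.exp (-θ) := Real.exp_pos _
    nlinarith
  have hpt : ∀ D : Fin N → T,
      (if ((Finset.univ.filter fun i => e (D i)).card : ℝ) ≤ k then ∏ i, w (D i) else 0)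
      ≤ Real.exp (θ * k) * (Real.exp (-θ * ((Finset.univ.filter
          fun i => e (D i)).card : ℝ)) * ∏ i, w (D i)) := by
    intro D
    have hprod : 0 ≤ ∏ i, w (D i) := Finset.prod_nonneg fun i _ => hw0 _
    by_cases hc : ((Finset.univ.filter fun i => e (D i)).card : ℝ) ≤ k
    · rw [if_pos hc]
      have h1 : (1:ℝ) ≤ Real.exp (θ * k) * Real.exp (-θ * ((Finset.univ.filter
          fun i => e (D i)).card : ℝ)) := by
        rw [← Real.exp_add]
        apply Real.one_le_exp
        nlinarith
      nlinarith [mul_nonneg (sub_nonneg.mpr h1) hprod]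
    · rw [if_neg hc]
      positivity
  calc ∑ D : Fin N → T, (if ((Finset.univ.filter fun i => e (D i)).card : ℝ) ≤ k
        then ∏ i, w (D i) else 0)
      ≤ ∑ D : Fin N → T, Real.exp (θ * k) * (Real.exp (-θ * ((Finset.univ.filter
          fun i => e (D i)).card : ℝ)) * ∏ i, w (D i)) := Finset.sum_le_sum fun D _ => hpt D
    _ = Real.exp (θ * k) * ∑ D : Fin N → T, Real.exp (-θ * ((Finset.univ.filter
          fun i => e (D i)).card : ℝ)) * ∏ i, w (D i) := by rw [Finset.mul_sum]
    _ ≤ Real.exp (θ * k) * Real.exp ((N : ℝ) * (∑ τ, if e τ then w τ else 0)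
          * (Real.exp (-θ) - 1)) :=
        mul_le_mul_of_nonneg_left (chernoff_core w hw1 e (-θ) hbase) (le_of_lt (Real.exp_pos _))
    _ = Real.exp (θ * k + (N : ℝ) * (∑ τ, if e τ then w τ else 0) * (Real.exp (-θ) - 1)) := by
        rw [← Real.exp_add]

end Chernoff
section PrDFacts
variable {S A : Type} [Fintype S] [Fintype A] [DecidableEq S] [DecidableEq A]

lemma dataP_nonneg (M : MDP S A) {π : S → A → ℝ} (hπ : IsPolicy π) {N H : ℕ}
    (D : Fin N → Fin H → S × A) : 0 ≤ dataP M π D :=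
  Finset.prod_nonneg fun i _ => trajP_nonneg M hπ _

lemma sum_dataP (M : MDP S A) {π : S → A → ℝ} (hπ : IsPolicy π) (N H : ℕ) :
    ∑ D : Fin N → Fin H → S × A, dataP M π D = 1 := by
  unfold dataP
  rw [sum_prod_eq_pow (trajP M π), sum_trajP M hπ H, one_pow]

lemma PrD_eq_ite (M : MDP S A) (π : S → A → ℝ) {N H : ℕ}
    (P : (Fin N → Fin H → S × A) → Prop) [DecidablePred P] :
    PrD M π {D | P D} = ∑ D, if P D then dataP M π D else 0 := by
  unfold PrD
  refine Finset.sum_congr rfl fun D _ => ?_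
  by_cases h : P D
  · rw [if_pos h, Set.indicator_of_mem (show D ∈ {D | P D} from h)]
  · rw [if_neg h, Set.indicator_of_notMem (show D ∉ {D | P D} from h)]

lemma PrD_nonneg (M : MDP S A) {π : S → A → ℝ} (hπ : IsPolicy π) {N H : ℕ}
    (E : Set (Fin N → Fin H → S × A)) : 0 ≤ PrD M π E :=
  Finset.sum_nonneg fun D _ =>
    Set.indicator_nonneg (fun D' _ => dataP_nonneg M hπ D') D

lemma PrD_compl (M : MDP S A) {π : S → A → ℝ} (hπ : IsPolicy π) {N H : ℕ}
    (E : Set (Fin N → Fin H → S × A)) : PrD M π E = 1 - PrD M π Eᶜ := by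
  have hadd : PrD M π E + PrD M π Eᶜ = 1 := by
    unfold PrD
    rw [← Finset.sum_add_distrib]
    rw [show ∑ D : Fin N → Fin H → S × A,
        (Set.indicator E (dataP M π) D + Set.indicator Eᶜ (dataP M π) D)
        = ∑ D : Fin N → Fin H → S × A, dataP M π D from
      Finset.sum_congr rfl fun D _ => Set.indicator_self_add_compl_apply E (dataP M π) D]
    exact sum_dataP M hπ N H
  linarith

lemma PrD_union_le (M : MDP S A) {π : S → A → ℝ} (hπ : IsPolicy π) {N H : ℕ}
    (E F : Set (Fin N → Fin H → S × A)) :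
    PrD M π (E ∪ F) ≤ PrD M π E + PrD M π F := by
  unfold PrD
  rw [← Finset.sum_add_distrib]
  refine Finset.sum_le_sum fun D _ => ?_
  by_cases h : D ∈ E ∪ F
  · rw [Set.indicator_of_mem h]
    rcases h with h | h
    · have h1 := Set.indicator_of_mem h (dataP M π)
      have h2 := Set.indicator_nonneg (fun D' _ => dataP_nonneg M hπ D') (s := F) D
      linarith [le_of_eq h1.symm]
    · have h1 := Set.indicator_of_mem h (dataP M π)
      have h2 := Set.indicator_nonneg (fun D' _ => dataP_nonneg M hπ D') (s := E) D
      linarith [le_of_eq h1.symm]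
  · rw [Set.indicator_of_notMem h]
    have h2 := Set.indicator_nonneg (fun D' _ => dataP_nonneg M hπ D') (s := E) D
    have h3 := Set.indicator_nonneg (fun D' _ => dataP_nonneg M hπ D') (s := F) D
    linarith

lemma PrD_mono (M : MDP S A) {π : S → A → ℝ} (hπ : IsPolicy π) {N H : ℕ}
    {E F : Set (Fin N → Fin H → S × A)} (h : E ⊆ F) : PrD M π E ≤ PrD M π F :=
  Finset.sum_le_sum fun D _ =>
    Set.indicator_le_indicator_of_subset h (fun D' => dataP_nonneg M hπ D') D

lemma PrD_iUnion_le (M : MDP S A) {π : S → A → ℝ} (hπ : IsPolicy π) {N H : ℕ}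
    {ι : Type} [Fintype ι] (F : ι → Set (Fin N → Fin H → S × A)) :
    PrD M π (⋃ i, F i) ≤ ∑ i, PrD M π (F i) := by
  unfold PrD
  rw [Finset.sum_comm]
  refine Finset.sum_le_sum fun D _ => ?_
  by_cases h : D ∈ ⋃ i, F i
  · rw [Set.indicator_of_mem h]
    obtain ⟨i, hi⟩ := Set.mem_iUnion.mp h
    calc dataP M π D = Set.indicator (F i) (dataP M π) D := (Set.indicator_of_mem hi _).symm
      _ ≤ ∑ j, Set.indicator (F j) (dataP M π) D :=
        Finset.single_le_sum (f := fun j => Set.indicator (F j) (dataP M π) D)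
          (fun j _ => Set.indicator_nonneg (fun D' _ => dataP_nonneg M hπ D') D)
          (Finset.mem_univ i)
  · rw [Set.indicator_of_notMem h]
    exact Finset.sum_nonneg fun j _ =>
      Set.indicator_nonneg (fun D' _ => dataP_nonneg M hπ D') D

end PrDFacts

section Scalar

lemma exp_taylor {x : ℝ} (hx : |x| ≤ 1/5) : Real.exp x ≤ 1 + x + (49/90) * x^2 := by
  have hb := Real.exp_bound (x := x) (le_trans hx (by norm_num)) (n := 3) (by norm_num)
  have hsum : ∑ m ∈ Finset.range 3, x ^ m / (Nat.factorial m : ℝ) = 1 + x + x^2/2 := by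
    rw [Finset.sum_range_succ, Finset.sum_range_succ, Finset.sum_range_succ,
      Finset.sum_range_zero]
    norm_num [Nat.factorial]
  rw [hsum] at hb
  norm_num [Nat.factorial] at hb
  have h3 : |x|^3 ≤ (1/5) * x^2 := by
    have h4 : |x|^3 = |x| * |x|^2 := by ring
    rw [h4, sq_abs]
    have h5 : (0:ℝ) ≤ x^2 := sq_nonneg x
    nlinarith [abs_nonneg x]
  have := abs_le.mp hb
  nlinarith

lemma exp_quartic {ε : ℝ} (hε : 0 ≤ ε) : (1 + ε/4)^4 ≤ Real.exp ε := by
  have h1 : 1 + ε/4 ≤ Real.exp (ε/4) := by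
    have := Real.add_one_le_exp (ε/4)
    linarith
  have h2 : (1 + ε/4)^4 ≤ (Real.exp (ε/4))^4 :=
    pow_le_pow_left₀ (by linarith) h1 4
  have h3 : (Real.exp (ε/4))^4 = Real.exp (ε/4 * 4) := by
    rw [← Real.exp_nat_mul]
    ring_nf
  rw [h3] at h2
  have h4 : ε/4 * 4 = ε := by ring
  rwa [h4] at h2

lemma key_ratio {ε : ℝ} (hε : 0 < ε) (hε1 : ε ≤ 1) :
    1 + 2*ε/5 ≤ Real.exp ε * (1 - 2*ε/5) := by
  have hq := exp_quartic (le_of_lt hε)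
  have h2 : ε^2 ≤ ε := by nlinarith
  have h3 : ε^3 ≤ ε := by nlinarith
  have h4 : ε^4 ≤ ε := by nlinarith
  have h5 : ε^5 ≤ ε := by nlinarith [pow_nonneg hε.le 3]
  have hr : 1 + 2*ε/5 ≤ (1 + ε/4)^4 * (1 - 2*ε/5) := by nlinarith
  have h15 : 0 < 1 - 2*ε/5 := by linarith
  nlinarith

/-- Deterministic conclusion from the four good events. -/
lemma det_good (π q p ε : ℝ) (N Csa Ns : ℕ) (πmin : ℝ)
    (hq : q = π * p) (hπmin : 0 < πmin) (hππ : πmin ≤ π) (hp : 0 < p)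
    (hε : 0 < ε) (hε1 : ε ≤ 1) (hN : 0 < (N:ℝ))
    (g1 : (Csa : ℝ) < (1 + 2*ε/5) * ((N:ℝ) * q))
    (g2 : (1 - 2*ε/5) * ((N:ℝ) * q) < (Csa : ℝ))
    (g3 : (Ns : ℝ) < (1 + 2*ε/5) * ((N:ℝ) * p))
    (g4 : (1 - 2*ε/5) * ((N:ℝ) * p) < (Ns : ℝ)) :
    |Real.log (max πmin ((Csa : ℝ) / max 1 (Ns : ℝ))) - Real.log π| ≤ ε := by
  have hπ0 : 0 < π := lt_of_lt_of_le hπmin hππ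
  have hη1 : (0:ℝ) < 1 - 2*ε/5 := by linarith
  have hη2 : (0:ℝ) < 1 + 2*ε/5 := by linarith
  have hNs0 : (0:ℝ) < (Ns : ℝ) := lt_trans (by positivity) g4
  have hNs1 : (1:ℝ) ≤ (Ns : ℝ) := by
    have : Ns ≠ 0 := by
      intro h
      rw [h] at hNs0
      simp at hNs0
    exact_mod_cast Nat.one_le_iff_ne_zero.mpr this
  have hmax : max (1:ℝ) (Ns : ℝ) = (Ns : ℝ) := max_eq_right hNs1
  rw [hmax]
  have hkey := key_ratio hε hε1
  have hexp1 : (1:ℝ) ≤ Real.exp ε := Real.one_le_exp (le_of_lt hε)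
  have hexp0 : (0:ℝ) < Real.exp ε := Real.exp_pos ε
  -- upper bound on the ratio
  have hup : (Csa : ℝ) / (Ns : ℝ) ≤ π * Real.exp ε := by
    rw [div_le_iff₀ hNs0]
    -- Csa ≤ π e^ε Ns; use Csa < (1+η)Nq = (1+η)Nπp and Ns > (1-η)Np
    have h1 : (Csa : ℝ) < (1 + 2*ε/5) * ((N:ℝ) * (π * p)) := by rw [← hq]; exact g1
    have h2 : π * Real.exp ε * ((1 - 2*ε/5) * ((N:ℝ) * p)) ≤ π * Real.exp ε * (Ns : ℝ) :=
      mul_le_mul_of_nonneg_left (le_of_lt g4) (by positivity)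
    have h3 : (1 + 2*ε/5) * ((N:ℝ) * (π * p)) ≤ π * Real.exp ε * ((1 - 2*ε/5) * ((N:ℝ) * p)) := by
      have h4 : (1 + 2*ε/5) * π ≤ Real.exp ε * (1 - 2*ε/5) * π :=
        mul_le_mul_of_nonneg_right hkey (le_of_lt hπ0)
      nlinarith [mul_pos hN hp]
    linarith
  -- lower bound on the ratio
  have hlow : π / Real.exp ε ≤ (Csa : ℝ) / (Ns : ℝ) := by
    rw [div_le_div_iff₀ hexp0 hNs0]
    have h1 : (1 - 2*ε/5) * ((N:ℝ) * (π * p)) < (Csa : ℝ) := by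
      rw [← hq]
      exact g2
    have h2 : π * (Ns : ℝ) ≤ π * ((1 + 2*ε/5) * ((N:ℝ) * p)) :=
      mul_le_mul_of_nonneg_left (le_of_lt g3) (le_of_lt hπ0)
    have h3 : (1 + 2*ε/5) * π ≤ Real.exp ε * (1 - 2*ε/5) * π :=
      mul_le_mul_of_nonneg_right hkey (le_of_lt hπ0)
    nlinarith [mul_pos hN hp, mul_nonneg (le_of_lt hN) (le_of_lt hp)]
  set r := max πmin ((Csa : ℝ) / (Ns : ℝ)) with hrdef
  have hr_pos : 0 < r := lt_of_lt_of_le hπmin (le_max_left _ _)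
  have hπe : π ≤ π * Real.exp ε := by nlinarith
  have hr_up : r ≤ π * Real.exp ε := max_le (le_trans hππ hπe) hup
  have hr_low : π / Real.exp ε ≤ r := le_trans hlow (le_max_right _ _)
  rw [abs_le]
  constructor
  · have hlog1 : Real.log (π / Real.exp ε) ≤ Real.log r :=
      Real.log_le_log (by positivity) hr_low
    rw [Real.log_div (ne_of_gt hπ0) (ne_of_gt hexp0), Real.log_exp] at hlog1
    linarith
  · have hlog2 : Real.log r ≤ Real.log (π * Real.exp ε) :=
      Real.log_le_log hr_pos hr_up
    rw [Real.log_mul (ne_of_gt hπ0) (ne_of_gt hexp0), Real.log_exp] at hlog2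
    linarith

/-- Numeric bound on the Chernoff exponents. -/
lemma numeric_tail (ε πm pm L : ℝ) (N : ℕ) (μ : ℝ)
    (hε : 0 < ε) (hε1 : ε ≤ 1) (hπm : 0 < πm) (hpm : 0 < pm)
    (hL : (1.08 : ℝ) ≤ L)
    (hN : 16 * L^2 / (ε^2 * πm * pm) ≤ (N:ℝ))
    (hμl : πm * pm ≤ μ) :
    (-(ε/5 * ((1 + 2*ε/5) * ((N:ℝ) * μ))) + (N:ℝ) * μ * (Real.exp (ε/5) - 1) ≤ -L)
    ∧ ((ε/5) * ((1 - 2*ε/5) * ((N:ℝ) * μ)) + (N:ℝ) * μ * (Real.exp (-(ε/5)) - 1) ≤ -L) := by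
  have hθ : 0 < ε/5 := by linarith
  have hθ5 : ε/5 ≤ 1/5 := by linarith
  have ht1 : Real.exp (ε/5) ≤ 1 + ε/5 + (49/90) * (ε/5)^2 :=
    exp_taylor (by rw [abs_of_nonneg (le_of_lt hθ)]; exact hθ5)
  have ht2 : Real.exp (-(ε/5)) ≤ 1 - ε/5 + (49/90) * (ε/5)^2 := by
    have := exp_taylor (x := -(ε/5)) (by rw [abs_of_nonpos (by linarith)]; simp; linarith)
    have hsq : (-(ε/5))^2 = (ε/5)^2 := by ring
    rw [hsq] at this
    linarith
  have hd : 0 < ε^2 * πm * pm := by positivity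
  have hNμ : 16 * L^2 ≤ (N:ℝ) * μ * ε^2 := by
    rw [div_le_iff₀ hd] at hN
    have hμ2 : (N:ℝ) * (ε^2 * πm * pm) ≤ (N:ℝ) * μ * ε^2 := by
      have hN0 : (0:ℝ) ≤ (N:ℝ) := Nat.cast_nonneg N
      have h5 : (N:ℝ) * (πm * pm) ≤ (N:ℝ) * μ := mul_le_mul_of_nonneg_left hμl hN0
      nlinarith
    linarith
  have hNμ0 : 0 ≤ (N:ℝ) * μ := by
    have : 0 < πm * pm := mul_pos hπm hpm
    have hμ0 : 0 < μ := lt_of_lt_of_le this hμl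
    positivity
  have hkey : L ≤ (131/90) * ((N:ℝ) * μ) * (ε/5)^2 := by
    have h1 : (131/90) * ((N:ℝ) * μ) * (ε/5)^2 = (131/2250) * ((N:ℝ) * μ * ε^2) := by ring
    rw [h1]
    have h2 : (131/2250) * (16 * L^2) ≤ (131/2250) * ((N:ℝ) * μ * ε^2) := by linarith
    nlinarith
  constructor
  · nlinarith [mul_le_mul_of_nonneg_left ht1 hNμ0]
  · nlinarith [mul_le_mul_of_nonneg_left ht2 hNμ0]

end Scalar
section Tails
variable {S A : Type} [Fintype S] [Fintype A] [DecidableEq S] [DecidableEq A]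

lemma NsCount_eq_card {N H : ℕ} (D : Fin N → Fin H → S × A) (s : S) :
    NsCount D s = (Finset.univ.filter fun i : Fin N => ∃ t : Fin H, (D i t).1 = s).card := by
  classical
  unfold NsCount NsaCount
  have hdisj : ∀ a ∈ (Finset.univ : Finset A), ∀ b ∈ (Finset.univ : Finset A), a ≠ b →
      Disjoint
        (Finset.univ.filter fun i : Fin N => ∃ t : Fin H, (D i t).1 = s ∧ (D i t).2 = a
          ∧ ∀ t' : Fin H, t' < t → (D i t').1 ≠ s)
        (Finset.univ.filter fun i : Fin N => ∃ t : Fin H, (D i t).1 = s ∧ (D i t).2 = b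
          ∧ ∀ t' : Fin H, t' < t → (D i t').1 ≠ s) := by
    intro a _ b _ hab
    rw [Finset.disjoint_left]
    intro i hia hib
    rw [Finset.mem_filter] at hia hib
    obtain ⟨_, t1, h1, h2, h3⟩ := hia
    obtain ⟨_, t2, h4, h5, h6⟩ := hib
    have ht : t1 = t2 := fv_uniq (D i) s h1 h4 h3 h6
    exact hab (h2 ▸ ht ▸ h5 ▸ rfl)
  have hbi : Finset.univ.biUnion (fun a : A =>
      Finset.univ.filter fun i : Fin N => ∃ t : Fin H, (D i t).1 = s ∧ (D i t).2 = a
        ∧ ∀ t' : Fin H, t' < t → (D i t').1 ≠ s)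
      = Finset.univ.filter fun i : Fin N => ∃ t : Fin H, (D i t).1 = s := by
    ext i
    simp only [Finset.mem_biUnion, Finset.mem_filter, Finset.mem_univ, true_and]
    constructor
    · rintro ⟨a, t, h1, _, _⟩
      exact ⟨t, h1⟩
    · rintro ⟨t, ht⟩
      have hfe := (first_exists (D i) s).mp ⟨t, ht⟩
      obtain ⟨t0, h1, _, h3⟩ := hfe
      exact ⟨(D i t0).2, t0, h1, rfl, h3⟩
  rw [← hbi, Finset.card_biUnion hdisj]
  refine Finset.sum_congr rfl fun a _ => ?_
  congr!

open Classical in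
lemma tail_q_up (M : MDP S A) {π : S → A → ℝ} (hπ : IsPolicy π) {N H : ℕ}
    (s : S) (a : A) (θ k : ℝ) (hθ : 0 ≤ θ) :
    PrD M π {D : Fin N → Fin H → S × A | k ≤ (NsaCount D s a : ℝ)}
      ≤ Real.exp (-(θ * k) + (N : ℝ) * qProb M π H s a * (Real.exp θ - 1)) := by
  classical
  rw [PrD_eq_ite]
  have hch := chernoff_up (T := Fin H → S × A) (trajP M π) (trajP_nonneg M hπ)
    (sum_trajP M hπ H)
    (fun τ => ∃ t : Fin H, (τ t).1 = s ∧ (τ t).2 = a ∧ ∀ t' : Fin H, t' < t → (τ t').1 ≠ s)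
    (N := N) θ k hθ
  have hcount : ∀ D : Fin N → Fin H → S × A,
      (NsaCount D s a : ℝ) = ((Finset.univ.filter fun i : Fin N =>
        ∃ t : Fin H, (D i t).1 = s ∧ (D i t).2 = a
          ∧ ∀ t' : Fin H, t' < t → (D i t').1 ≠ s).card : ℝ) := by
    intro D
    unfold NsaCount
    congr!
  have hμ : (∑ τ : Fin H → S × A, if (∃ t : Fin H, (τ t).1 = s ∧ (τ t).2 = a
      ∧ ∀ t' : Fin H, t' < t → (τ t').1 ≠ s) then trajP M π τ else 0)
      = qProb M π H s a := by
    unfold qProb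
    refine Finset.sum_congr rfl fun τ _ => ?_
    by_cases h : ∃ t : Fin H, (τ t).1 = s ∧ (τ t).2 = a
        ∧ ∀ t' : Fin H, t' < t → (τ t').1 ≠ s
    · simp only [if_pos h]
    · simp only [if_neg h]
  rw [hμ] at hch
  refine le_trans (le_of_eq ?_) hch
  refine Finset.sum_congr rfl fun D _ => ?_
  rw [hcount D]
  unfold dataP
  by_cases h : k ≤ ((Finset.univ.filter fun i : Fin N =>
      ∃ t : Fin H, (D i t).1 = s ∧ (D i t).2 = a
        ∧ ∀ t' : Fin H, t' < t → (D i t').1 ≠ s).card : ℝ)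
  · simp only [if_pos h]
  · simp only [if_neg h]

open Classical in
lemma tail_q_low (M : MDP S A) {π : S → A → ℝ} (hπ : IsPolicy π) {N H : ℕ}
    (s : S) (a : A) (θ k : ℝ) (hθ : 0 ≤ θ) :
    PrD M π {D : Fin N → Fin H → S × A | (NsaCount D s a : ℝ) ≤ k}
      ≤ Real.exp (θ * k + (N : ℝ) * qProb M π H s a * (Real.exp (-θ) - 1)) := by
  classical
  rw [PrD_eq_ite]
  have hch := chernoff_low (T := Fin H → S × A) (trajP M π) (trajP_nonneg M hπ)
    (sum_trajP M hπ H)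
    (fun τ => ∃ t : Fin H, (τ t).1 = s ∧ (τ t).2 = a ∧ ∀ t' : Fin H, t' < t → (τ t').1 ≠ s)
    (N := N) θ k hθ
  have hcount : ∀ D : Fin N → Fin H → S × A,
      (NsaCount D s a : ℝ) = ((Finset.univ.filter fun i : Fin N =>
        ∃ t : Fin H, (D i t).1 = s ∧ (D i t).2 = a
          ∧ ∀ t' : Fin H, t' < t → (D i t').1 ≠ s).card : ℝ) := by
    intro D
    unfold NsaCount
    congr!
  have hμ : (∑ τ : Fin H → S × A, if (∃ t : Fin H, (τ t).1 = s ∧ (τ t).2 = a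
      ∧ ∀ t' : Fin H, t' < t → (τ t').1 ≠ s) then trajP M π τ else 0)
      = qProb M π H s a := by
    unfold qProb
    refine Finset.sum_congr rfl fun τ _ => ?_
    by_cases h : ∃ t : Fin H, (τ t).1 = s ∧ (τ t).2 = a
        ∧ ∀ t' : Fin H, t' < t → (τ t').1 ≠ s
    · simp only [if_pos h]
    · simp only [if_neg h]
  rw [hμ] at hch
  refine le_trans (le_of_eq ?_) hch
  refine Finset.sum_congr rfl fun D _ => ?_
  rw [hcount D]
  unfold dataP
  by_cases h : ((Finset.univ.filter fun i : Fin N =>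
      ∃ t : Fin H, (D i t).1 = s ∧ (D i t).2 = a
        ∧ ∀ t' : Fin H, t' < t → (D i t').1 ≠ s).card : ℝ) ≤ k
  · simp only [if_pos h]
  · simp only [if_neg h]

open Classical in
lemma tail_p_up (M : MDP S A) {π : S → A → ℝ} (hπ : IsPolicy π) {N H : ℕ}
    (s : S) (θ k : ℝ) (hθ : 0 ≤ θ) :
    PrD M π {D : Fin N → Fin H → S × A | k ≤ (NsCount D s : ℝ)}
      ≤ Real.exp (-(θ * k) + (N : ℝ) * pProb M π H s * (Real.exp θ - 1)) := by
  classical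
  rw [PrD_eq_ite]
  have hch := chernoff_up (T := Fin H → S × A) (trajP M π) (trajP_nonneg M hπ)
    (sum_trajP M hπ H) (fun τ => ∃ t : Fin H, (τ t).1 = s) (N := N) θ k hθ
  have hμ : (∑ τ : Fin H → S × A, if (∃ t : Fin H, (τ t).1 = s) then trajP M π τ else 0)
      = pProb M π H s := by
    unfold pProb
    refine Finset.sum_congr rfl fun τ _ => ?_
    by_cases h : ∃ t : Fin H, (τ t).1 = s
    · simp only [if_pos h]
    · simp only [if_neg h]
  rw [hμ] at hch
  refine le_trans (le_of_eq ?_) hch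
  refine Finset.sum_congr rfl fun D _ => ?_
  have hcnt : (NsCount D s : ℝ) = ((Finset.univ.filter fun i : Fin N =>
      ∃ t : Fin H, (D i t).1 = s).card : ℝ) := by
    rw [NsCount_eq_card]
  rw [hcnt]
  unfold dataP
  by_cases h : k ≤ ((Finset.univ.filter fun i : Fin N => ∃ t : Fin H, (D i t).1 = s).card : ℝ)
  · simp only [if_pos h]
  · simp only [if_neg h]

open Classical in
lemma tail_p_low (M : MDP S A) {π : S → A → ℝ} (hπ : IsPolicy π) {N H : ℕ}
    (s : S) (θ k : ℝ) (hθ : 0 ≤ θ) :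
    PrD M π {D : Fin N → Fin H → S × A | (NsCount D s : ℝ) ≤ k}
      ≤ Real.exp (θ * k + (N : ℝ) * pProb M π H s * (Real.exp (-θ) - 1)) := by
  classical
  rw [PrD_eq_ite]
  have hch := chernoff_low (T := Fin H → S × A) (trajP M π) (trajP_nonneg M hπ)
    (sum_trajP M hπ H) (fun τ => ∃ t : Fin H, (τ t).1 = s) (N := N) θ k hθ
  have hμ : (∑ τ : Fin H → S × A, if (∃ t : Fin H, (τ t).1 = s) then trajP M π τ else 0)
      = pProb M π H s := by
    unfold pProb
    refine Finset.sum_congr rfl fun τ _ => ?_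
    by_cases h : ∃ t : Fin H, (τ t).1 = s
    · simp only [if_pos h]
    · simp only [if_neg h]
  rw [hμ] at hch
  refine le_trans (le_of_eq ?_) hch
  refine Finset.sum_congr rfl fun D _ => ?_
  have hcnt : (NsCount D s : ℝ) = ((Finset.univ.filter fun i : Fin N =>
      ∃ t : Fin H, (D i t).1 = s).card : ℝ) := by
    rw [NsCount_eq_card]
  rw [hcnt]
  unfold dataP
  by_cases h : ((Finset.univ.filter fun i : Fin N => ∃ t : Fin H, (D i t).1 = s).card : ℝ) ≤ k
  · simp only [if_pos h]
  · simp only [if_neg h]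

end Tails
/-- sample complexity of estimating the MCE reward centroid. -/
theorem statement12 {S A : Type} [Fintype S] [Fintype A] [DecidableEq S] [DecidableEq A]
    (M : MDP S A) (πE : S → A → ℝ) (hπE : IsPolicy πE) (hsupp : supp M πE = Set.univ)
    (πmin' : ℝ) (hπmin' : 0 < πmin') (hlb : ∀ s a, πmin' ≤ πE s a)
    (ε δ : ℝ) (hε : ε ∈ Set.Ioo (0 : ℝ) 1) (hδ : δ ∈ Set.Ioo (0 : ℝ) 1)
    (N H : ℕ) (hH : Fintype.card S ≤ H)
    (hN : 16 * Real.log (4 * (Fintype.card S : ℝ) * (Fintype.card A : ℝ) / δ) ^ 2 /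
        (ε ^ 2 * πmin' * pminH M πE H) ≤ (N : ℝ)) :
    1 - δ ≤ PrD M πE {D : Fin N → Fin H → S × A |
      ∀ s a, |Real.log (pihat πmin' D s a) - Real.log (πE s a)| ≤ ε} := by
  classical
  obtain ⟨hε0, hε1⟩ := hε
  obtain ⟨hδ0, hδ1⟩ := hδ
  have hSne : Nonempty S := ⟨M.s0⟩
  have hAne : Nonempty A := by
    by_contra h
    rw [not_nonempty_iff] at h
    have h1 := hπE.2 M.s0
    rw [Finset.univ_eq_empty, Finset.sum_empty] at h1
    norm_num at h1
  have hcS : (1:ℝ) ≤ (Fintype.card S : ℝ) := by exact_mod_cast Fintype.card_pos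
  have hcA : (1:ℝ) ≤ (Fintype.card A : ℝ) := by exact_mod_cast Fintype.card_pos
  set L := Real.log (4 * (Fintype.card S : ℝ) * (Fintype.card A : ℝ) / δ) with hLdef
  have hRpos : 0 < 4 * (Fintype.card S : ℝ) * (Fintype.card A : ℝ) / δ := by positivity
  have hR4 : (4:ℝ) ≤ 4 * (Fintype.card S : ℝ) * (Fintype.card A : ℝ) / δ := by
    rw [le_div_iff₀ hδ0]
    nlinarith
  have hL4 : Real.log 4 ≤ L := Real.log_le_log (by norm_num) hR4
  have hlog2 := Real.log_two_gt_d9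
  have hlog4 : Real.log 4 = 2 * Real.log 2 := by
    rw [show (4:ℝ) = 2^2 by norm_num, Real.log_pow]
    push_cast
    ring
  have hL108 : (1.08:ℝ) ≤ L := by
    rw [hlog4] at hL4
    linarith
  have hLpos : 0 < L := by linarith
  have hpm : 0 < pminH M πE H := pminH_pos M hπE hsupp hH
  have hπm1 : πmin' ≤ 1 := by
    obtain ⟨a0⟩ := hAne
    have h2 : πE M.s0 a0 ≤ ∑ a, πE M.s0 a :=
      Finset.single_le_sum (fun a _ => hπE.1 M.s0 a) (Finset.mem_univ a0)
    have h3 := hπE.2 M.s0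
    have := hlb M.s0 a0
    linarith
  have hd : 0 < ε^2 * πmin' * pminH M πE H := by positivity
  have hN0 : 0 < (N:ℝ) := by
    have h16 : 0 < 16 * L^2 / (ε^2 * πmin' * pminH M πE H) := by positivity
    linarith
  have hθ0 : (0:ℝ) ≤ ε/5 := by linarith
  -- per-state facts
  have hp_lb : ∀ s, pminH M πE H ≤ pProb M πE H s := by
    intro s
    rw [pProb_eq_visitP]
    exact pminH_le M πE H hsupp s
  have hp_pos : ∀ s, 0 < pProb M πE H s := fun s => lt_of_lt_of_le hpm (hp_lb s)
  have hq_eq : ∀ s a, qProb M πE H s a = πE s a * pProb M πE H s :=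
    fun s a => qProb_eq_mul M hπE H s a
  have hμq : ∀ s a, πmin' * pminH M πE H ≤ qProb M πE H s a := by
    intro s a
    rw [hq_eq s a]
    exact mul_le_mul (hlb s a) (hp_lb s) (le_of_lt hpm)
      (le_trans (le_of_lt hπmin') (hlb s a))
  have hμp : ∀ s, πmin' * pminH M πE H ≤ pProb M πE H s := by
    intro s
    have h1 : πmin' * pminH M πE H ≤ pminH M πE H := by nlinarith
    exact le_trans h1 (hp_lb s)
  -- bad events
  set B1 : S × A → Set (Fin N → Fin H → S × A) := fun sa =>
    {D | (1 + 2*ε/5) * ((N:ℝ) * qProb M πE H sa.1 sa.2) ≤ (NsaCount D sa.1 sa.2 : ℝ)}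
    with hB1
  set B2 : S × A → Set (Fin N → Fin H → S × A) := fun sa =>
    {D | (NsaCount D sa.1 sa.2 : ℝ) ≤ (1 - 2*ε/5) * ((N:ℝ) * qProb M πE H sa.1 sa.2)}
    with hB2
  set B3 : S × A → Set (Fin N → Fin H → S × A) := fun sa =>
    {D | (1 + 2*ε/5) * ((N:ℝ) * pProb M πE H sa.1) ≤ (NsCount D sa.1 : ℝ)}
    with hB3
  set B4 : S × A → Set (Fin N → Fin H → S × A) := fun sa =>
    {D | (NsCount D sa.1 : ℝ) ≤ (1 - 2*ε/5) * ((N:ℝ) * pProb M πE H sa.1)}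
    with hB4
  set Bad : S × A → Set (Fin N → Fin H → S × A) := fun sa =>
    B1 sa ∪ B2 sa ∪ B3 sa ∪ B4 sa with hBad
  -- individual tail bounds
  have hbound : ∀ sa : S × A, PrD M πE (Bad sa) ≤ 4 * Real.exp (-L) := by
    intro sa
    obtain ⟨s, a⟩ := sa
    have hnum_q := numeric_tail ε πmin' (pminH M πE H) L N (qProb M πE H s a)
      hε0 (le_of_lt hε1) hπmin' hpm hL108 hN (hμq s a)
    have hnum_p := numeric_tail ε πmin' (pminH M πE H) L N (pProb M πE H s)
      hε0 (le_of_lt hε1) hπmin' hpm hL108 hN (hμp s)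
    have h1 : PrD M πE (B1 (s, a)) ≤ Real.exp (-L) := by
      refine le_trans (tail_q_up M hπE s a (ε/5)
        ((1 + 2*ε/5) * ((N:ℝ) * qProb M πE H s a)) hθ0) ?_
      exact Real.exp_le_exp.mpr hnum_q.1
    have h2 : PrD M πE (B2 (s, a)) ≤ Real.exp (-L) := by
      refine le_trans (tail_q_low M hπE s a (ε/5)
        ((1 - 2*ε/5) * ((N:ℝ) * qProb M πE H s a)) hθ0) ?_
      exact Real.exp_le_exp.mpr hnum_q.2
    have h3 : PrD M πE (B3 (s, a)) ≤ Real.exp (-L) := by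
      refine le_trans (tail_p_up M hπE s (ε/5)
        ((1 + 2*ε/5) * ((N:ℝ) * pProb M πE H s)) hθ0) ?_
      exact Real.exp_le_exp.mpr hnum_p.1
    have h4 : PrD M πE (B4 (s, a)) ≤ Real.exp (-L) := by
      refine le_trans (tail_p_low M hπE s (ε/5)
        ((1 - 2*ε/5) * ((N:ℝ) * pProb M πE H s)) hθ0) ?_
      exact Real.exp_le_exp.mpr hnum_p.2
    have hu1 := PrD_union_le M hπE (B1 (s,a) ∪ B2 (s,a) ∪ B3 (s,a)) (B4 (s,a))
    have hu2 := PrD_union_le M hπE (B1 (s,a) ∪ B2 (s,a)) (B3 (s,a))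
    have hu3 := PrD_union_le M hπE (B1 (s,a)) (B2 (s,a))
    rw [hBad]
    dsimp only
    linarith
  -- complement inclusion
  have hsub : {D : Fin N → Fin H → S × A |
      ∀ s a, |Real.log (pihat πmin' D s a) - Real.log (πE s a)| ≤ ε}ᶜ
      ⊆ ⋃ sa : S × A, Bad sa := by
    rw [Set.compl_subset_comm]
    intro D hD
    intro s a
    have hnot : ∀ sa : S × A, D ∉ Bad sa := by
      intro sa hmem
      exact hD (Set.mem_iUnion.mpr ⟨sa, hmem⟩)
    have hnot1 := hnot (s, a)
    rw [hBad] at hnot1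
    dsimp only at hnot1
    rw [Set.mem_union, Set.mem_union, Set.mem_union] at hnot1
    push_neg at hnot1
    obtain ⟨⟨⟨hg1, hg2⟩, hg3⟩, hg4⟩ := hnot1
    rw [hB1] at hg1; rw [hB2] at hg2; rw [hB3] at hg3; rw [hB4] at hg4
    simp only [Set.mem_setOf_eq, not_le] at hg1 hg2 hg3 hg4
    unfold pihat
    exact det_good (πE s a) (qProb M πE H s a) (pProb M πE H s) ε N
      (NsaCount D s a) (NsCount D s) πmin' (hq_eq s a) hπmin' (hlb s a)
      (hp_pos s) hε0 (le_of_lt hε1) hN0 hg1 hg2 hg3 hg4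
  -- put it together
  have hcompl := PrD_compl M hπE {D : Fin N → Fin H → S × A |
      ∀ s a, |Real.log (pihat πmin' D s a) - Real.log (πE s a)| ≤ ε}
  have hchain : PrD M πE ({D : Fin N → Fin H → S × A |
      ∀ s a, |Real.log (pihat πmin' D s a) - Real.log (πE s a)| ≤ ε}ᶜ) ≤ δ := by
    have hs1 := PrD_mono M hπE hsub
    have hs2 := PrD_iUnion_le M hπE Bad
    have hs3 : ∑ sa : S × A, PrD M πE (Bad sa)
        ≤ ∑ _sa : S × A, 4 * Real.exp (-L) :=
      Finset.sum_le_sum fun sa _ => hbound sa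
    have hs4 : ∑ _sa : S × A, (4:ℝ) * Real.exp (-L)
        = (Fintype.card S : ℝ) * (Fintype.card A : ℝ) * (4 * Real.exp (-L)) := by
      rw [Finset.sum_const, Finset.card_univ, Fintype.card_prod]
      push_cast
      ring
    have hexp : Real.exp (-L) = δ / (4 * (Fintype.card S : ℝ) * (Fintype.card A : ℝ)) := by
      rw [hLdef, ← Real.log_inv, Real.exp_log (by positivity)]
      rw [inv_div]
    have hs5 : (Fintype.card S : ℝ) * (Fintype.card A : ℝ) * (4 * Real.exp (-L)) = δ := by
      rw [hexp]
      field_simp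
    linarith
  linarith
end
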